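/- arXiv:2510.07913 — 13 statements merged into one kernel-verified Lean document; each statement's English description precedes it below -/
import Mathlib

section
/- For every real a ≥ 0, every ε ∈ (0,1), and every natural number m with m ≥ 2.24·a + 0.648·ln(12/ε), there exists a real polynomial p with deg p ≤ m such that for all u ∈ [−1,1], |p(u) − e^{−au}| ≤ (ε/6)·e^{−au}. (Writing a = βK/2, a degree of 1.12·βK + 0.648·ln(12/ε) thus suffices to approximate e^{−βKu/2} on [−1,1] to relative error ε/6.) -/
/-!
Write `u = cos θ`. Expanding `((e^{iθ} + e^{-iθ}) / 2)^n` gives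
`u^n = 2^{-n} ∑_j C(n,j) T_{2j-n}(u)`: `u^n` is the expectation of `T_{|S_n|}(u)` for a simple
random walk `S_n`. Since `|T_k| ≤ 1` on `[-1, 1]`, dropping the terms with `|2j - n| > m` costs at
most `P(|S_n| > m) ≤ 2 e^{-t(m+1)} cosh(t)^n` for every `t ≥ 0` (Chernoff). Truncating every
term of the exponential series this way yields a polynomial of degree `≤ m` within
`2 exp(|x| cosh t - t(m+1))` of `e^{xu}`. For `x = -a` take `t = 125/81 = 1/0.648`: then
`cosh t + 1 ≤ 2.24 t`, and the error is at most `(ε/6) e^{-a} ≤ (ε/6) e^{-au}`.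
-/

open Real Finset Polynomial Polynomial.Chebyshev

theorem cos_pow_eq_sum_choose_mul_cos (n : ℕ) (θ : ℝ) :
    cos θ ^ n = ∑ j ∈ range (n + 1), n.choose j / 2 ^ n * cos ((2 * j - n : ℤ) * θ) := by
  have hcos : (cos θ : ℂ) ^ n = ∑ j ∈ range (n + 1), (n.choose j / 2 ^ n : ℝ) *
      Complex.exp (((2 * j - n : ℤ) * θ : ℝ) * Complex.I) := by
    rw [Complex.ofReal_cos, ← mul_div_cancel_left₀ (Complex.cos θ) two_ne_zero,
      Complex.two_cos, div_pow, add_pow, sum_div]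
    refine sum_congr rfl fun j hj => ?_
    rw [← Complex.exp_nat_mul, ← Complex.exp_nat_mul, ← Complex.exp_add,
      Nat.cast_sub (Nat.lt_succ_iff.mp (mem_range.mp hj))]
    push_cast
    ring_nf
  have := congrArg Complex.re hcos
  rw [← Complex.ofReal_pow, Complex.ofReal_re, Complex.re_sum] at this
  simpa only [Complex.re_ofReal_mul, Complex.exp_ofReal_mul_I_re] using this

theorem sum_choose_mul_exp (n : ℕ) (t : ℝ) :
    ∑ j ∈ range (n + 1), (n.choose j : ℝ) * exp (t * (2 * j - n : ℤ)) =
      (2 * cosh t) ^ n := by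
  rw [cosh_eq, mul_div_cancel₀ _ two_ne_zero, add_pow]
  refine sum_congr rfl fun j hj => ?_
  rw [← exp_nat_mul, ← exp_nat_mul, ← exp_add,
    Nat.cast_sub (Nat.lt_succ_iff.mp (mem_range.mp hj))]
  push_cast
  ring_nf

theorem one_le_exp_mul_add_exp_neg {t r d : ℝ} (ht : 0 ≤ t) (hd : r ≤ |d|) :
    1 ≤ exp (-(t * r)) * (exp (t * d) + exp (-t * d)) := by
  rw [exp_neg, ← div_eq_inv_mul, one_le_div (exp_pos _)]
  rcases abs_choice d with h | h <;> rw [h] at hd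
  · linarith [exp_le_exp.mpr (mul_le_mul_of_nonneg_left hd ht), exp_pos (-t * d)]
  · have : t * r ≤ -t * d := by nlinarith
    linarith [exp_le_exp.mpr this, exp_pos (t * d)]

theorem sum_choose_filter_le (n m : ℕ) {t : ℝ} (ht : 0 ≤ t) :
    ∑ j ∈ range (n + 1) with m < (2 * ((j : ℕ) : ℤ) - n).natAbs, (n.choose j : ℝ)
      ≤ 2 * exp (-(t * (m + 1))) * (2 * cosh t) ^ n := by
  set E := exp (-(t * (m + 1)))
  set f : ℕ → ℝ := fun j => E * (n.choose j * exp (t * (2 * j - n : ℤ))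
    + n.choose j * exp (-t * (2 * j - n : ℤ)))
  calc _ ≤ ∑ j ∈ range (n + 1) with m < (2 * ((j : ℕ) : ℤ) - n).natAbs, f j := by
        refine sum_le_sum fun j hj => ?_
        have hd : (m + 1 : ℝ) ≤ |((2 * j - n : ℤ) : ℝ)| := by
          rw [← Int.cast_abs, ← Int.natCast_natAbs]
          exact_mod_cast (mem_filter.mp hj).2
        have := one_le_exp_mul_add_exp_neg ht hd
        simp only [f, ← mul_add]
        nlinarith [Nat.cast_nonneg (α := ℝ) (n.choose j)]
    _ ≤ ∑ j ∈ range (n + 1), f j :=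
        sum_le_sum_of_subset_of_nonneg (filter_subset _ _) fun _ _ _ => by positivity
    _ = 2 * E * (2 * cosh t) ^ n := by
        rw [← mul_sum, sum_add_distrib, sum_choose_mul_exp, sum_choose_mul_exp, cosh_neg]
        ring

theorem pow_eq_sum_choose_mul_eval_T {u : ℝ} (hu : u ∈ Set.Icc (-1) 1) (n : ℕ) :
    u ^ n = ∑ j ∈ range (n + 1), n.choose j / 2 ^ n * (T ℝ (2 * j - n)).eval u := by
  obtain ⟨θ, -, rfl⟩ : ∃ θ ∈ Set.Icc 0 π, cos θ = u := by
    simpa using Real.bijOn_cos.surjOn hu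
  simp only [T_real_cos, cos_pow_eq_sum_choose_mul_cos]

noncomputable def chebyshevWeight (n k : ℕ) : ℝ :=
  ∑ j ∈ range (n + 1) with (2 * ((j : ℕ) : ℤ) - n).natAbs = k, (n.choose j / 2 ^ n : ℝ)

theorem chebyshevWeight_nonneg (n k : ℕ) : 0 ≤ chebyshevWeight n k :=
  sum_nonneg fun _ _ => by positivity

theorem chebyshevWeight_le_one (n k : ℕ) : chebyshevWeight n k ≤ 1 :=
  calc chebyshevWeight n k ≤ ∑ j ∈ range (n + 1), (n.choose j / 2 ^ n : ℝ) :=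
        sum_le_sum_of_subset_of_nonneg (filter_subset _ _) fun _ _ _ => by positivity
    _ = 1 := by
        rw [← sum_div, div_eq_one_iff_eq (by positivity)]
        exact_mod_cast Nat.sum_range_choose n

theorem sum_chebyshevWeight_mul_eval_T (n m : ℕ) (u : ℝ) :
    ∑ k ∈ range (m + 1), chebyshevWeight n k * (T ℝ k).eval u
      = ∑ j ∈ range (n + 1) with (2 * ((j : ℕ) : ℤ) - n).natAbs ≤ m,
          n.choose j / 2 ^ n * (T ℝ (2 * j - n)).eval u := by
  set g : ℕ → ℕ := fun j => (2 * (j : ℤ) - n).natAbs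
  calc _ = ∑ k ∈ range (m + 1), ∑ j ∈ range (n + 1) with g j = k,
          n.choose j / 2 ^ n * (T ℝ (g j)).eval u := by
        simp only [chebyshevWeight, sum_mul]
        refine sum_congr rfl fun k _ => sum_congr rfl fun j hj => ?_
        rw [(mem_filter.mp hj).2]
    _ = _ := by
        rw [sum_fiberwise_eq_sum_filter]
        simp only [g, mem_range, Nat.lt_succ_iff, T_natAbs]

theorem abs_sum_chebyshevWeight_mul_eval_T_sub_pow_le (n m : ℕ) {t u : ℝ} (ht : 0 ≤ t)
    (hu : u ∈ Set.Icc (-1) 1) :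
    |∑ k ∈ range (m + 1), chebyshevWeight n k * (T ℝ k).eval u - u ^ n|
      ≤ 2 * exp (-(t * (m + 1))) * cosh t ^ n := by
  have hsplit := sum_filter_add_sum_filter_not (range (n + 1))
    (fun j : ℕ => (2 * (j : ℤ) - n).natAbs ≤ m)
    (fun j : ℕ => n.choose j / 2 ^ n * (T ℝ (2 * j - n)).eval u)
  simp only [not_le] at hsplit
  rw [sum_chebyshevWeight_mul_eval_T, pow_eq_sum_choose_mul_eval_T hu, ← hsplit,
    sub_add_cancel_left, abs_neg]
  have hT : ∀ j : ℕ, |(T ℝ (2 * j - n)).eval u| ≤ 1 := fun j =>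
    abs_eval_T_real_le_one _ (abs_le.mpr hu)
  calc _ ≤ ∑ j ∈ range (n + 1) with m < (2 * ((j : ℕ) : ℤ) - n).natAbs,
          (n.choose j / 2 ^ n : ℝ) := by
        refine (abs_sum_le_sum_abs _ _).trans (sum_le_sum fun j _ => ?_)
        rw [abs_mul, abs_of_nonneg (by positivity)]
        exact mul_le_of_le_one_right (by positivity) (hT j)
    _ ≤ 2 * exp (-(t * (m + 1))) * (2 * cosh t) ^ n / 2 ^ n := by
        rw [← sum_div]
        gcongr
        exact sum_choose_filter_le n m ht
    _ = 2 * exp (-(t * (m + 1))) * cosh t ^ n := by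
        rw [mul_pow]; field_simp

theorem hasSum_pow_div_factorial_exp (x : ℝ) : HasSum (fun n => x ^ n / n.factorial) (exp x) := by
  rw [exp_eq_exp_ℝ]
  exact NormedSpace.expSeries_div_hasSum_exp x

noncomputable def expChebyshevApprox (x : ℝ) (m : ℕ) : ℝ[X] :=
  ∑ k ∈ range (m + 1), C (∑' n, x ^ n / n.factorial * chebyshevWeight n k) * T ℝ k

theorem natDegree_expChebyshevApprox_le (x : ℝ) (m : ℕ) :
    (expChebyshevApprox x m).natDegree ≤ m := by
  refine natDegree_sum_le_of_forall_le _ _ fun k hk => natDegree_C_mul_le _ _ |>.trans ?_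
  rw [natDegree_T, Int.natAbs_natCast]
  exact Nat.lt_succ_iff.mp (mem_range.mp hk)

theorem abs_eval_expChebyshevApprox_sub_exp_le (x : ℝ) (m : ℕ) {t u : ℝ} (ht : 0 ≤ t)
    (hu : u ∈ Set.Icc (-1) 1) :
    |(expChebyshevApprox x m).eval u - exp (x * u)| ≤ 2 * exp (|x| * cosh t - t * (m + 1)) := by
  set c : ℕ → ℝ := fun n => x ^ n / n.factorial
  set E := exp (-(t * (m + 1)))
  have hc : ∀ n, |c n| = |x| ^ n / n.factorial := fun n => by simp [c, abs_div]
  have hweight : ∀ k, HasSum (fun n => c n * chebyshevWeight n k)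
      (∑' n, c n * chebyshevWeight n k) := fun k =>
    (Summable.of_norm_bounded (Real.summable_pow_div_factorial |x|) fun n => by
      rw [norm_mul, Real.norm_eq_abs, Real.norm_eq_abs, hc,
        abs_of_nonneg (chebyshevWeight_nonneg n k)]
      exact mul_le_of_le_one_right (by positivity) (chebyshevWeight_le_one n k)).hasSum
  have happrox : HasSum
      (fun n => c n * ∑ k ∈ range (m + 1), chebyshevWeight n k * (T ℝ k).eval u)
      ((expChebyshevApprox x m).eval u) := by
    simp only [expChebyshevApprox, eval_finsetSum, eval_mul, eval_C, mul_sum, ← mul_assoc]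
    exact hasSum_sum fun k _ => (hweight k).mul_right _
  have hexp : HasSum (fun n => c n * u ^ n) (exp (x * u)) := by
    convert hasSum_pow_div_factorial_exp (x * u) using 2 with n
    ring
  have hbound : HasSum (fun n => 2 * E * ((|x| * cosh t) ^ n / n.factorial))
      (2 * E * exp (|x| * cosh t)) := (hasSum_pow_div_factorial_exp _).mul_left _
  calc _ ≤ 2 * E * exp (|x| * cosh t) := by
        refine (happrox.sub hexp).norm_le_of_bounded hbound fun n => ?_
        rw [Real.norm_eq_abs, ← mul_sub, abs_mul, hc, mul_pow]
        calc |x| ^ n / n.factorial * |_|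
            ≤ |x| ^ n / n.factorial * (2 * E * cosh t ^ n) :=
              mul_le_mul_of_nonneg_left
                (abs_sum_chebyshevWeight_mul_eval_T_sub_pow_le n m ht hu) (by positivity)
          _ = _ := by ring
    _ = _ := by
        rw [mul_assoc, ← exp_add]
        ring_nf

theorem cosh_125_div_81_le : cosh (125 / 81 : ℝ) ≤ 199 / 81 := by
  have hexp : ∀ x : ℝ, |x| ≤ 1 →
      exp x ≤ ∑ i ∈ range 8, x ^ i / i.factorial + |x| ^ 8 * (9 / (Nat.factorial 8 * 8)) :=
    fun x hx => sub_le_iff_le_add'.mp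
      (abs_sub_le_iff.mp (Real.exp_bound hx (n := 8) (by norm_num))).1
  -- `Real.exp_bound` needs `|x| ≤ 1`, so bound `exp (± 125 / 162)` and square.
  have hsq : ∀ x : ℝ, exp (2 * x) = exp x ^ 2 := fun x => by rw [← exp_nat_mul]; norm_num
  have hup := hexp (125 / 162) (by norm_num [abs_of_pos])
  have hlo := hexp (-(125 / 162)) (by norm_num [abs_of_pos])
  simp only [sum_range_succ, sum_range_zero, Nat.factorial] at hup hlo
  norm_num [abs_of_pos] at hup hlo
  rw [cosh_eq, show (125 / 81 : ℝ) = 2 * (125 / 162) by norm_num, ← mul_neg, hsq, hsq]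
  nlinarith [exp_pos (125 / 162 : ℝ), exp_pos (-(125 / 162) : ℝ)]

theorem stmt1 (a : ℝ) (ha : 0 ≤ a) (ε : ℝ) (hε : ε ∈ Set.Ioo (0 : ℝ) 1)
    (m : ℕ) (hm : 2.24 * a + 0.648 * Real.log (12 / ε) ≤ (m : ℝ)) :
    ∃ p : Polynomial ℝ, p.natDegree ≤ m ∧
      ∀ u ∈ Set.Icc (-1 : ℝ) 1,
        |p.eval u - Real.exp (-a * u)| ≤ (ε / 6) * Real.exp (-a * u) := by
  refine ⟨expChebyshevApprox (-a) m, natDegree_expChebyshevApprox_le _ _, fun u hu => ?_⟩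
  have hlog : Real.log (ε / 12) = -Real.log (12 / ε) := by
    rw [← Real.log_inv, inv_div]
  have hexponent : |-a| * cosh (125 / 81) - 125 / 81 * (m + 1) ≤ Real.log (ε / 12) + -a * u := by
    rw [abs_neg, abs_of_nonneg ha, hlog]
    nlinarith [mul_le_mul_of_nonneg_left cosh_125_div_81_le ha, hu.2]
  calc _ ≤ 2 * exp (|-a| * cosh (125 / 81) - 125 / 81 * (m + 1)) :=
        abs_eval_expChebyshevApprox_sub_exp_le (-a) m (by norm_num) hu
    _ ≤ 2 * exp (Real.log (ε / 12) + -a * u) := by gcongr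
    _ = ε / 6 * exp (-a * u) := by
        rw [exp_add, exp_log (div_pos hε.1 (by norm_num))]
        ring
end

section
/- Let I be a nonempty finite index set, let w : I → ℝ with w_i > 0 for all i, let 0 ≤ η < 1, and let w' : I → ℝ satisfy |w'_i − w_i| ≤ η·w_i for all i. Set W = ∑_i w_i and W' = ∑_i w'_i (so W' ≥ (1−η)W > 0). Then (1/2)·∑_i | w'_i/W' − w_i/W | ≤ η/(1−η). -/
/-! Writing `W = ∑ w` and `W' = ∑ w'`, the identity
`w'ᵢ / W' - wᵢ / W = (w'ᵢ - wᵢ) / W' + wᵢ (W - W') / (W W')` bounds the ℓ¹ distance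
of the normalized vectors by `2 ∑ |w' - w| / W'`. A relative perturbation of size `η` gives
`∑ |w' - w| ≤ η W` and `W' ≥ (1 - η) W`, so the total variation is at most `η / (1 - η)`. -/

open Finset

section Normalization

variable {ι : Type*} [Fintype ι]

theorem abs_sum_sub_sum_le (w w' : ι → ℝ) :
    |∑ i, w' i - ∑ i, w i| ≤ ∑ i, |w' i - w i| := by
  rw [← sum_sub_distrib]
  exact abs_sum_le_sum_abs _ _

theorem abs_div_sum_sub_div_sum_le {w w' : ι → ℝ} (hw : ∀ i, 0 ≤ w i)
    (hW : 0 < ∑ j, w j) (hW' : 0 < ∑ j, w' j) (i : ι) :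
    |w' i / ∑ j, w' j - w i / ∑ j, w j| ≤
      |w' i - w i| / ∑ j, w' j + w i * |∑ j, w j - ∑ j, w' j| / ((∑ j, w j) * ∑ j, w' j) := by
  set W := ∑ j, w j
  set W' := ∑ j, w' j
  have hsplit : w' i / W' - w i / W = (w' i - w i) / W' + w i * (W - W') / (W * W') := by
    field_simp
    ring
  calc |w' i / W' - w i / W|
      ≤ |(w' i - w i) / W'| + |w i * (W - W') / (W * W')| := hsplit ▸ abs_add_le _ _
    _ = |w' i - w i| / W' + w i * |W - W'| / (W * W') := by
      rw [abs_div, abs_div, abs_mul, abs_of_pos hW', abs_of_pos (mul_pos hW hW'),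
        abs_of_nonneg (hw i)]

theorem sum_abs_div_sum_sub_div_sum_le {w w' : ι → ℝ} (hw : ∀ i, 0 ≤ w i)
    (hW : 0 < ∑ j, w j) (hW' : 0 < ∑ j, w' j) :
    ∑ i, |w' i / ∑ j, w' j - w i / ∑ j, w j| ≤ 2 * (∑ i, |w' i - w i|) / ∑ j, w' j := by
  set W := ∑ j, w j with hW_def
  set W' := ∑ j, w' j
  have hdiff : |W - W'| ≤ ∑ i, |w' i - w i| := abs_sub_comm W' W ▸ abs_sum_sub_sum_le w w'
  calc ∑ i, |w' i / W' - w i / W|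
      ≤ ∑ i, (|w' i - w i| / W' + w i * |W - W'| / (W * W')) :=
        sum_le_sum fun i _ => abs_div_sum_sub_div_sum_le hw hW hW' i
    _ = (∑ i, |w' i - w i|) / W' + |W - W'| / W' := by
        rw [sum_add_distrib, ← sum_div, ← sum_div, ← sum_mul, ← hW_def]
        field_simp
    _ ≤ (∑ i, |w' i - w i|) / W' + (∑ i, |w' i - w i|) / W' := by gcongr
    _ = 2 * (∑ i, |w' i - w i|) / W' := by ring

end Normalization

theorem stmt2 {I : Type*} [Fintype I] [Nonempty I] (w w' : I → ℝ)
    (hw : ∀ i, 0 < w i) (η : ℝ) (hη0 : 0 ≤ η) (hη1 : η < 1)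
    (hw' : ∀ i, |w' i - w i| ≤ η * w i) :
    (1 / 2) * ∑ i, |w' i / (∑ j, w' j) - w i / (∑ j, w j)| ≤ η / (1 - η) := by
  have hW : 0 < ∑ j, w j := sum_pos (fun i _ => hw i) univ_nonempty
  have hdev : ∑ i, |w' i - w i| ≤ η * ∑ j, w j := by
    rw [mul_sum]
    exact sum_le_sum fun i _ => hw' i
  have hW'_ge : (1 - η) * ∑ j, w j ≤ ∑ j, w' j := by
    linarith [(abs_le.mp ((abs_sum_sub_sum_le w w').trans hdev)).1]
  have hW'_ge_pos : 0 < (1 - η) * ∑ j, w j := mul_pos (by linarith) hW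
  have hW' : 0 < ∑ j, w' j := hW'_ge_pos.trans_le hW'_ge
  calc (1 / 2) * ∑ i, |w' i / (∑ j, w' j) - w i / (∑ j, w j)|
      ≤ (1 / 2) * (2 * (∑ i, |w' i - w i|) / ∑ j, w' j) := by
        gcongr
        exact sum_abs_div_sum_sub_div_sum_le (fun i => (hw i).le) hW hW'
    _ ≤ (1 / 2) * (2 * (η * ∑ j, w j) / ∑ j, w' j) := by gcongr
    _ = η * (∑ j, w j) / ∑ j, w' j := by ring
    _ ≤ η * (∑ j, w j) / ((1 - η) * ∑ j, w j) := by gcongr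
    _ = η / (1 - η) := mul_div_mul_right _ _ hW.ne'
end

section
/- Let P be a real polynomial of degree at most ℓ and let m ≥ 1. Then there exist real numbers w_0, …, w_ℓ, depending only on P and m, such that for every commutative ℝ-algebra R and all elements z_1, …, z_m ∈ R with z_i² = 1 for all i, one has P(z_1 + … + z_m) = ∑_{j=0}^{ℓ} w_j · ∑_{y ∈ {0,1}^m, |y| = j} z_1^{y_1} ⋯ z_m^{y_m}, where |y| denotes the Hamming weight of y. -/
/-!
If every `z i` squares to `1`, then multiplying `e_{j+1} = esymm z (j + 1)` by `s = ∑ i, z i`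
gives `(m - j) e_j + (j + 2) e_{j+2}`: in `z i * ∏ k ∈ S, z k` the factor `z i` either cancels
(`i ∈ S`) or enlarges `S` (`i ∉ S`). Hence multiplication by `s` acts on the coordinates with
respect to the `e_j` through an operator `T = esymmMulSum m` depending only on `m`, never raising
the index by more than one, and `P(s) = P(s) e_0` has the coordinates `P(T) δ_0`, supported in
`[0, deg P]`.
-/

open Finset

section DoubleCounting

variable {ι M : Type*} [Fintype ι] [DecidableEq ι] [AddCommMonoid M]

theorem sum_powersetCard_succ_sum_mem_erase (j : ℕ) (g : Finset ι → ι → M) :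
    ∑ S ∈ powersetCard (j + 1) univ, ∑ i ∈ S, g (S.erase i) i =
      ∑ T ∈ powersetCard j univ, ∑ i ∈ Tᶜ, g T i := by
  rw [sum_sigma', sum_sigma']
  refine sum_nbij' (fun p => ⟨p.1.erase p.2, p.2⟩) (fun q => ⟨insert q.2 q.1, q.2⟩)
    ?_ ?_ ?_ ?_ fun _ _ => rfl
  · rintro ⟨S, i⟩ hS
    simp_all [card_erase_of_mem]
  · rintro ⟨T, i⟩ hT
    simp_all [card_insert_of_notMem]
  · rintro ⟨S, i⟩ hS
    simp_all [insert_erase]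
  · rintro ⟨T, i⟩ hT
    simp_all

theorem sum_powersetCard_succ_sum_erase (j : ℕ) (f : Finset ι → M) :
    ∑ S ∈ powersetCard (j + 1) univ, ∑ i ∈ S, f (S.erase i) =
      ∑ T ∈ powersetCard j univ, (Fintype.card ι - j) • f T := by
  rw [sum_powersetCard_succ_sum_mem_erase j fun T _ => f T]
  refine sum_congr rfl fun T hT => ?_
  rw [sum_const, card_compl, mem_powersetCard_univ.mp hT]

theorem sum_powersetCard_succ_sum_compl_insert (j : ℕ) (f : Finset ι → M) :
    ∑ S ∈ powersetCard (j + 1) univ, ∑ i ∈ Sᶜ, f (insert i S) =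
      ∑ U ∈ powersetCard (j + 2) univ, (j + 2) • f U := by
  rw [← sum_powersetCard_succ_sum_mem_erase (j + 1) fun S i => f (insert i S)]
  refine sum_congr rfl fun U hU => ?_
  rw [sum_congr rfl fun i hi => congrArg f (insert_erase hi), sum_const,
    mem_powersetCard_univ.mp hU]

end DoubleCounting

section ElementarySymmetric

variable {ι R : Type*} [Fintype ι] [CommSemiring R]

def esymm (z : ι → R) (j : ℕ) : R :=
  ∑ S ∈ powersetCard j univ, ∏ i ∈ S, z i

theorem esymm_zero (z : ι → R) : esymm z 0 = 1 := by
  simp [esymm]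

theorem esymm_one (z : ι → R) : esymm z 1 = ∑ i, z i := by
  simp [esymm, powersetCard_one]

theorem sum_mul_esymm_succ {z : ι → R} (hz : ∀ i, z i ^ 2 = 1) (j : ℕ) :
    (∑ i, z i) * esymm z (j + 1) =
      (Fintype.card ι - j) • esymm z j + (j + 2) • esymm z (j + 2) := by
  classical
  have hsplit : ∀ S : Finset ι, (∑ i, z i) * ∏ k ∈ S, z k =
      ∑ i ∈ S, ∏ k ∈ S.erase i, z k + ∑ i ∈ Sᶜ, ∏ k ∈ insert i S, z k := by
    intro S
    rw [sum_mul, ← sum_add_sum_compl S]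
    congr 1
    · refine sum_congr rfl fun i hi => ?_
      rw [← mul_prod_erase S z hi, ← mul_assoc, ← sq, hz, one_mul]
    · refine sum_congr rfl fun i hi => ?_
      rw [prod_insert (mem_compl.mp hi)]
  rw [esymm, mul_sum, sum_congr rfl fun S _ => hsplit S, sum_add_distrib,
    sum_powersetCard_succ_sum_erase j fun T => ∏ k ∈ T, z k,
    sum_powersetCard_succ_sum_compl_insert j fun U => ∏ k ∈ U, z k, esymm, esymm,
    smul_sum, smul_sum]

end ElementarySymmetric

section Coefficients

open Finsupp Polynomial

variable (K : Type*) [CommSemiring K]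

/-- Multiplication by `∑ i, z i` in the coordinates `esymm z`, for `n` variables squaring to `1`
(see `sum_mul_esymm_succ`). -/
noncomputable def esymmMulSum (n : ℕ) : (ℕ →₀ K) →ₗ[K] (ℕ →₀ K) :=
  linearCombination K fun
    | 0 => single 1 1
    | j + 1 => single j ((n - j : ℕ) : K) + single (j + 2) ((j + 2 : ℕ) : K)

variable {K}

theorem esymmMulSum_mem_supported {n k : ℕ} {c : ℕ →₀ K}
    (hc : c ∈ supported K K ↑(range (k + 1))) :
    esymmMulSum K n c ∈ supported K K ↑(range (k + 2)) := by
  suffices (supported K K ↑(range (k + 1))).map (esymmMulSum K n) ≤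
      supported K K ↑(range (k + 2)) from this (Submodule.mem_map_of_mem hc)
  rw [esymmMulSum, ← span_image_eq_map_linearCombination, Submodule.span_le]
  rintro _ ⟨j, hj, rfl⟩
  simp only [coe_range, Set.mem_Iio] at hj
  rcases j with _ | j
  · exact single_mem_supported K _ (by simp)
  · exact add_mem (single_mem_supported K _ (by simp; omega))
      (single_mem_supported K _ (by simp; omega))

theorem aeval_esymmMulSum_single_zero_mem_supported (n : ℕ) (P : K[X]) :
    aeval (esymmMulSum K n) P (single 0 1) ∈ supported K K ↑(range (P.natDegree + 1)) := by
  have hpow : ∀ k, (esymmMulSum K n ^ k) (single 0 1) ∈ supported K K ↑(range (k + 1)) := by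
    intro k
    induction k with
    | zero => exact single_mem_supported K _ (by simp)
    | succ k ih => rw [pow_succ', Module.End.mul_apply]; exact esymmMulSum_mem_supported ih
  rw [aeval_eq_sum_range, LinearMap.sum_apply]
  exact Submodule.sum_mem _ fun k hk => Submodule.smul_mem _ _
    (supported_mono (by simpa using hk) (hpow k))

variable {ι R : Type*} [Fintype ι] [CommSemiring R] [Algebra K R] {z : ι → R}

theorem linearCombination_esymmMulSum (hz : ∀ i, z i ^ 2 = 1) (c : ℕ →₀ K) :
    linearCombination K (esymm z) (esymmMulSum K (Fintype.card ι) c) =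
      (∑ i, z i) * linearCombination K (esymm z) c := by
  induction c using Finsupp.induction_linear with
  | zero => simp
  | add c d hc hd => simp [hc, hd, mul_add]
  | single j b =>
    rcases j with _ | j
    · simp only [esymmMulSum, linearCombination_single, map_smul, mul_smul_comm, esymm_zero,
        one_smul, mul_one, esymm_one]
    · simp only [esymmMulSum, linearCombination_single, map_smul, map_add, mul_smul_comm,
        sum_mul_esymm_succ hz, Nat.cast_smul_eq_nsmul]

theorem linearCombination_aeval_esymmMulSum (hz : ∀ i, z i ^ 2 = 1) (P : K[X])
    (c : ℕ →₀ K) :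
    linearCombination K (esymm z) (aeval (esymmMulSum K (Fintype.card ι)) P c) =
      aeval (∑ i, z i) P * linearCombination K (esymm z) c := by
  have hpow : ∀ k, linearCombination K (esymm z) ((esymmMulSum K (Fintype.card ι) ^ k) c) =
      (∑ i, z i) ^ k * linearCombination K (esymm z) c := by
    intro k
    induction k with
    | zero => simp
    | succ k ih =>
      rw [pow_succ', Module.End.mul_apply, linearCombination_esymmMulSum hz, ih, pow_succ',
        mul_assoc]
  simp only [aeval_eq_sum_range, LinearMap.sum_apply, LinearMap.smul_apply,
    map_sum, map_smul, hpow, Finset.sum_mul, smul_mul_assoc]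

end Coefficients

theorem stmt3_general (ℓ m : ℕ) (P : Polynomial ℝ) (hP : P.natDegree ≤ ℓ) :
    ∃ w : ℕ → ℝ, ∀ (R : Type) [CommRing R] [Algebra ℝ R] (z : Fin m → R),
      (∀ i, z i ^ 2 = 1) →
      (Polynomial.aeval (∑ i, z i)) P =
        ∑ j ∈ Finset.range (ℓ + 1), w j •
          ∑ S ∈ Finset.powersetCard j (Finset.univ : Finset (Fin m)), ∏ i ∈ S, z i := by
  let w := Polynomial.aeval (esymmMulSum ℝ m) P (Finsupp.single 0 1)
  have hw : w ∈ Finsupp.supported ℝ ℝ ↑(range (ℓ + 1)) :=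
    Finsupp.supported_mono (by simpa using hP)
      (aeval_esymmMulSum_single_zero_mem_supported m P)
  refine ⟨w, fun R _ _ z hz => ?_⟩
  have h := linearCombination_aeval_esymmMulSum hz P (Finsupp.single 0 1)
  rw [Fintype.card_fin, Finsupp.linearCombination_apply_of_mem_supported ℝ hw] at h
  simpa [esymm] using h.symm

theorem stmt3 (ℓ m : ℕ) (hm : 1 ≤ m) (P : Polynomial ℝ) (hP : P.natDegree ≤ ℓ) :
    ∃ w : ℕ → ℝ, ∀ (R : Type) [CommRing R] [Algebra ℝ R] (z : Fin m → R),
      (∀ i, z i ^ 2 = 1) →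
      (Polynomial.aeval (∑ i, z i)) P =
        ∑ j ∈ Finset.range (ℓ + 1), w j •
          ∑ S ∈ Finset.powersetCard j (Finset.univ : Finset (Fin m)), ∏ i ∈ S, z i :=
  stmt3_general ℓ m P hP
end

section
/- Let R be a commutative ℚ-algebra, let m ≥ 1, and let z_1, …, z_m ∈ R with z_i² = 1 for all i. For 0 ≤ r ≤ m let e_r := ∑_{S ⊆ {1,…,m}, |S| = r} ∏_{i ∈ S} z_i. Then for every ℓ ≥ 0, (z_1 + … + z_m)^ℓ = ∑_{r=0}^{m} a(m,ℓ,r)·e_r, where a(m,ℓ,r) := 2^{−m} · ∑_{n₁=0}^{r} ∑_{n₂=0}^{m−r} (−1)^{n₁} · C(r,n₁) · C(m−r,n₂) · (m − 2n₁ − 2n₂)^ℓ ∈ ℚ. -/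
/-!
For `T ⊆ ι` let `ε_T` be the sign vector that is `-1` on `T` and `1` off `T`, and put
`P_T = ∏ i, (1 + ε_T(i) z_i)`. Since `z_j² = 1`, `z_j (1 + ε z_j) = ε (1 + ε z_j)`, so `P_T` is an
eigenvector of multiplication by `∑ z_i` with eigenvalue `∑ ε_T(i) = m - 2|T|`, while
`∑_T P_T = ∏ i, ((1 - z_i) + (1 + z_i)) = 2^m`. Hence `2^m (∑ z_i)^ℓ = ∑_T (m - 2|T|)^ℓ P_T`.
Expanding `P_T = ∑_S (∏_{i∈S} ε_T(i)) z^S`, the coefficient of `z^S` is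
`∑_T (-1)^|S ∩ T| (m - 2|T|)^ℓ`; splitting `T` into `S ∩ T` and `T \ S` and counting by
cardinalities turns it into `2^m a(m, ℓ, |S|)`.
-/

/-- The combinatorial coefficient `a(m,ℓ,r)`. -/
def aCoeff (m ℓ r : ℕ) : ℚ :=
  (2 ^ m : ℚ)⁻¹ * ∑ n₁ ∈ Finset.range (r + 1), ∑ n₂ ∈ Finset.range (m - r + 1),
    (-1 : ℚ) ^ n₁ * (r.choose n₁) * ((m - r).choose n₂) *
      ((m : ℚ) - 2 * n₁ - 2 * n₂) ^ ℓ

open Finset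

namespace SignProjector

theorem sum_powerset_sum_powerset_apply_card {α β M : Type*} [AddCommMonoid M]
    (s : Finset α) (t : Finset β) (g : ℕ → ℕ → M) :
    ∑ A ∈ s.powerset, ∑ B ∈ t.powerset, g #A #B =
      ∑ j ∈ range (#s + 1), ∑ k ∈ range (#t + 1), ((#s).choose j * (#t).choose k) • g j k := by
  simp only [sum_powerset_apply_card (g _), sum_powerset_apply_card fun j =>
    ∑ k ∈ range (#t + 1), (#t).choose k • g j k, smul_sum, mul_smul]

variable {ι : Type*} [DecidableEq ι]

theorem sum_eq_sum_powerset_inter_sdiff [Fintype ι] {M : Type*} [AddCommMonoid M]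
    (S : Finset ι) (f : Finset ι → Finset ι → M) :
    ∑ T, f (S ∩ T) (T \ S) = ∑ A ∈ S.powerset, ∑ B ∈ Sᶜ.powerset, f A B := by
  rw [← sum_product']
  refine sum_nbij' (fun T => (S ∩ T, T \ S)) (fun p => p.1 ∪ p.2) ?_ (by simp) ?_ ?_ (by simp)
  · simp +contextual [subset_iff]
  · intro T _
    ext
    grind
  · rintro ⟨A, B⟩ h
    simp only [mem_product, mem_powerset, subset_iff, mem_compl] at h
    ext <;> grind

def signs (T : Finset ι) (i : ι) : ℤ := if i ∈ T then -1 else 1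

theorem signs_mul_self (T : Finset ι) (i : ι) : signs T i * signs T i = 1 := by
  unfold signs; split_ifs <;> norm_num

theorem prod_signs (S T : Finset ι) : ∏ i ∈ S, signs T i = (-1) ^ #(S ∩ T) := by
  simp only [signs, prod_ite_mem, prod_const]

variable [Fintype ι]

theorem sum_signs (T : Finset ι) : ∑ i, signs T i = Fintype.card ι - 2 * #T := by
  simp only [signs, sum_ite, sum_const, filter_mem_eq_inter, univ_inter, smul_neg, nsmul_eq_mul,
    mul_one, filter_not, card_univ_sdiff, Nat.cast_sub (card_le_univ T)]
  ring

theorem sum_signs_eq_two_pow_mul_aCoeff (S : Finset ι) (ℓ : ℕ) :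
    ((∑ T, (∏ i ∈ S, signs T i) * (∑ i, signs T i) ^ ℓ : ℤ) : ℚ) =
      2 ^ Fintype.card ι * aCoeff (Fintype.card ι) ℓ #S := by
  set n := Fintype.card ι
  calc ((∑ T, (∏ i ∈ S, signs T i) * (∑ i, signs T i) ^ ℓ : ℤ) : ℚ)
      = ∑ T, (-1 : ℚ) ^ #(S ∩ T) * ((n : ℚ) - 2 * #(S ∩ T) - 2 * #(T \ S)) ^ ℓ := by
        push_cast [prod_signs, sum_signs]
        refine sum_congr rfl fun T _ => ?_
        rw [← card_inter_add_card_sdiff T S, inter_comm]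
        push_cast
        ring
    _ = ∑ A ∈ S.powerset, ∑ B ∈ Sᶜ.powerset,
          (-1 : ℚ) ^ #A * ((n : ℚ) - 2 * #A - 2 * #B) ^ ℓ :=
        sum_eq_sum_powerset_inter_sdiff S fun A B =>
          (-1 : ℚ) ^ #A * ((n : ℚ) - 2 * #A - 2 * #B) ^ ℓ
    _ = 2 ^ n * aCoeff n ℓ #S := by
        rw [sum_powerset_sum_powerset_apply_card S Sᶜ fun j k =>
            (-1 : ℚ) ^ j * ((n : ℚ) - 2 * j - 2 * k) ^ ℓ,
          aCoeff, mul_inv_cancel_left₀ (by positivity), card_compl]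
        simp only [nsmul_eq_mul]
        refine sum_congr rfl fun j _ => sum_congr rfl fun k _ => ?_
        push_cast
        ring

variable {R : Type*} [CommRing R]

def signProjector (z : ι → R) (T : Finset ι) : R := ∏ i, (1 + signs T i * z i)

theorem sum_signProjector (z : ι → R) : ∑ T, signProjector z T = 2 ^ Fintype.card ι := by
  have h_expand := prod_add (fun i => 1 - z i) (fun i => 1 + z i) univ
  simp only [sub_add_add_cancel, one_add_one_eq_two, prod_const, card_univ] at h_expand
  rw [h_expand, powerset_univ]
  refine sum_congr rfl fun T _ => ?_
  have h_piecewise := prod_piecewise univ T (fun i => 1 - z i) (fun i => 1 + z i)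
  rw [univ_inter] at h_piecewise
  rw [← h_piecewise]
  refine prod_congr rfl fun i _ => ?_
  by_cases hi : i ∈ T <;> simp [signs, hi, sub_eq_add_neg]

theorem signProjector_eq_sum (z : ι → R) (T : Finset ι) :
    signProjector z T = ∑ S, ((∏ i ∈ S, signs T i : ℤ) : R) * ∏ i ∈ S, z i := by
  simp only [signProjector, prod_one_add, powerset_univ, Int.cast_prod, prod_mul_distrib]

variable {z : ι → R}

theorem mul_signProjector (hz : ∀ i, z i ^ 2 = 1) (T : Finset ι) (j : ι) :
    z j * signProjector z T = signs T j * signProjector z T := by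
  have h_factor : z j * (1 + signs T j * z j) = signs T j * (1 + signs T j * z j) := by
    have hs : ((signs T j : ℤ) : R) * signs T j = 1 := by
      rw [← Int.cast_mul, signs_mul_self, Int.cast_one]
    linear_combination (signs T j : R) * hz j - z j * hs
  rw [signProjector, ← mul_prod_erase univ _ (mem_univ j), ← mul_assoc, h_factor, mul_assoc]

theorem pow_sum_mul_signProjector (hz : ∀ i, z i ^ 2 = 1) (T : Finset ι) (ℓ : ℕ) :
    (∑ i, z i) ^ ℓ * signProjector z T = ((∑ i, signs T i) ^ ℓ : ℤ) * signProjector z T := by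
  have h_sum :
      (∑ i, z i) * signProjector z T = ((∑ i, signs T i : ℤ) : R) * signProjector z T := by
    simp only [sum_mul, mul_signProjector hz, Int.cast_sum]
  induction ℓ with
  | zero => simp
  | succ ℓ ih => rw [pow_succ, mul_assoc, h_sum, mul_left_comm, ih, ← mul_assoc, Int.cast_pow,
      Int.cast_pow, ← pow_succ']

theorem two_pow_card_mul_pow_sum (hz : ∀ i, z i ^ 2 = 1) (ℓ : ℕ) :
    2 ^ Fintype.card ι * (∑ i, z i) ^ ℓ =
      ∑ S, ((∑ T, (∏ i ∈ S, signs T i) * (∑ i, signs T i) ^ ℓ : ℤ) : R) * ∏ i ∈ S, z i := by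
  calc 2 ^ Fintype.card ι * (∑ i, z i) ^ ℓ
      = ∑ T, ((∑ i, signs T i) ^ ℓ : ℤ) * signProjector z T := by
        rw [← sum_signProjector, mul_comm, mul_sum]
        exact sum_congr rfl fun T _ => pow_sum_mul_signProjector hz T ℓ
    _ = _ := by
        simp only [signProjector_eq_sum, mul_sum, Int.cast_sum, sum_mul]
        rw [sum_comm]
        refine sum_congr rfl fun S _ => sum_congr rfl fun T _ => ?_
        push_cast
        ring

theorem pow_sum_eq_sum_aCoeff_smul [Algebra ℚ R] (hz : ∀ i, z i ^ 2 = 1) (ℓ : ℕ) :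
    (∑ i, z i) ^ ℓ = ∑ S, aCoeff (Fintype.card ι) ℓ #S • ∏ i ∈ S, z i := by
  apply smul_right_injective R (pow_ne_zero (Fintype.card ι) (two_ne_zero' ℚ))
  simp only [smul_sum, smul_smul, ← sum_signs_eq_two_pow_mul_aCoeff, Int.cast_smul_eq_zsmul,
    zsmul_eq_mul]
  rw [Algebra.smul_def, map_pow, map_ofNat, two_pow_card_mul_pow_sum hz]

end SignProjector

open SignProjector in
theorem stmt4_general (m : ℕ) (ℓ : ℕ) (R : Type*) [CommRing R] [Algebra ℚ R]
    (z : Fin m → R) (hz : ∀ i, z i ^ 2 = 1) :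
    (∑ i, z i) ^ ℓ =
      ∑ r ∈ Finset.range (m + 1), aCoeff m ℓ r •
        ∑ S ∈ Finset.powersetCard r (Finset.univ : Finset (Fin m)), ∏ i ∈ S, z i := by
  rw [pow_sum_eq_sum_aCoeff_smul hz, ← powerset_univ, sum_powerset, card_univ, Fintype.card_fin]
  refine sum_congr rfl fun r _ => ?_
  rw [smul_sum]
  exact sum_congr rfl fun S hS => by rw [(mem_powersetCard.mp hS).2]

theorem stmt4 (m : ℕ) (hm : 1 ≤ m) (ℓ : ℕ) (R : Type*) [CommRing R] [Algebra ℚ R]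
    (z : Fin m → R) (hz : ∀ i, z i ^ 2 = 1) :
    (∑ i, z i) ^ ℓ =
      ∑ r ∈ Finset.range (m + 1), aCoeff m ℓ r •
        ∑ S ∈ Finset.powersetCard r (Finset.univ : Finset (Fin m)), ∏ i ∈ S, z i :=
  stmt4_general m ℓ R z hz
end

section
/- Let 0 ≤ r ≤ m and ℓ ≥ 0. The number of functions f : {1,…,ℓ} → {1,…,m} such that the fiber f^{−1}(i) has odd cardinality for every i with 1 ≤ i ≤ r and even cardinality for every i with r < i ≤ m equals 2^{−m} · ∑_{n₁=0}^{r} ∑_{n₂=0}^{m−r} (−1)^{n₁} · C(r,n₁) · C(m−r,n₂) · (m − 2n₁ − 2n₂)^ℓ (an equality of rational numbers). -/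
/-!
Write `c_i(f)` for the size of the fibre of `f` over `i`. Since `1 - (-1)^c` is `2` for odd `c`
and `0` for even `c`, and `1 + (-1)^c` the other way round,
`∏_{i < r} (1 - (-1)^{c_i(f)}) * ∏_{i ≥ r} (1 + (-1)^{c_i(f)})` is `2^m` times the indicator of the
parity condition. Expanding the products gives a signed sum over subsets `S` of `Fin m` of
`∏_{i ∈ S} (-1)^{c_i(f)} = ∏_x (-1)^{[f x ∈ S]}`, and summing this over all `f` gives
`(∑_j (-1)^{[j ∈ S]})^ℓ = (m - 2|S|)^ℓ`. Grouping the subsets by their sizes yields the binomials.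
-/

open Finset

section FiberParity

variable {R : Type*} [CommRing R] {α ι : Type*} [Fintype α]

theorem prod_one_sub (s : Finset ι) (y : ι → R) :
    ∏ i ∈ s, (1 - y i) = ∑ t ∈ s.powerset, (-1) ^ #t * ∏ i ∈ t, y i := by
  simp_rw [sub_eq_add_neg, prod_one_add, prod_neg]

theorem one_sub_neg_one_pow (n : ℕ) : 1 - (-1 : R) ^ n = if Odd n then 2 else 0 := by
  rcases n.even_or_odd with h | h
  · simp [h.neg_one_pow, Nat.not_odd_iff_even.2 h]
  · norm_num [h.neg_one_pow, h]

theorem one_add_neg_one_pow (n : ℕ) : 1 + (-1 : R) ^ n = if Even n then 2 else 0 := by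
  rcases n.even_or_odd with h | h
  · norm_num [h.neg_one_pow, h]
  · simp [h.neg_one_pow, Nat.not_even_iff_odd.2 h]

variable [DecidableEq ι]

theorem prod_neg_one_pow_card_fiber (f : α → ι) (T : Finset ι) :
    ∏ i ∈ T, (-1 : R) ^ #{x | f x = i} = ∏ x, if f x ∈ T then -1 else 1 := by
  simp_rw [← prod_const, prod_filter]
  rw [prod_comm]
  exact prod_congr rfl fun x _ => prod_ite_eq T (f x) fun _ => -1

variable [Fintype ι]

theorem sum_ite_mem_neg_one_one (T : Finset ι) :
    ∑ i, (if i ∈ T then (-1 : R) else 1) = Fintype.card ι - 2 * #T := by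
  rw [sum_ite, filter_mem_eq_inter, univ_inter, filter_not, filter_mem_eq_inter, univ_inter,
    ← compl_eq_univ_sdiff]
  simp only [sum_const, card_compl, nsmul_eq_mul, Nat.cast_sub (card_le_univ T)]
  ring

theorem sum_prod_neg_one_pow_card_fiber [DecidableEq α] (T : Finset ι) :
    ∑ f : α → ι, ∏ i ∈ T, (-1 : R) ^ #{x | f x = i} =
      (Fintype.card ι - 2 * #T) ^ Fintype.card α := by
  simp_rw [prod_neg_one_pow_card_fiber, ← sum_ite_mem_neg_one_one, ← card_univ, ← prod_const,
    Fintype.prod_sum]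

variable (p : ι → Prop) [DecidablePred p]

theorem prod_one_sub_mul_prod_one_add_neg_one_pow_card_fiber (f : α → ι) :
    (∏ i with p i, (1 - (-1 : R) ^ #{x | f x = i})) *
        ∏ i with ¬p i, (1 + (-1 : R) ^ #{x | f x = i}) =
      if ∀ i, if p i then Odd #{x | f x = i} else Even #{x | f x = i}
      then 2 ^ Fintype.card ι else 0 := by
  rw [← prod_ite, ← card_univ, ← prod_const, ← Fintype.prod_ite_zero]
  refine prod_congr rfl fun i _ => ?_
  by_cases hp : p i <;> simp [hp, one_sub_neg_one_pow, one_add_neg_one_pow]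

theorem ite_parity_card_fiber_eq_sum_powerset (f : α → ι) :
    (if ∀ i, if p i then Odd #{x | f x = i} else Even #{x | f x = i}
      then 2 ^ Fintype.card ι else 0 : R) =
      ∑ t ∈ (univ.filter p).powerset, ∑ u ∈ (univ.filter (¬p ·)).powerset,
        (-1) ^ #t * ∏ i ∈ t ∪ u, (-1 : R) ^ #{x | f x = i} := by
  rw [← prod_one_sub_mul_prod_one_add_neg_one_pow_card_fiber, prod_one_sub, prod_one_add,
    sum_mul_sum]
  refine sum_congr rfl fun t ht => sum_congr rfl fun u hu => ?_
  rw [prod_union ((disjoint_filter_filter_not _ _ p).mono (mem_powerset.1 ht) (mem_powerset.1 hu)),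
    mul_assoc]

theorem two_pow_mul_card_parity_fibers_eq_sum_powerset :
    (2 ^ Fintype.card ι : R) *
        Nat.card {f : α → ι // ∀ i, if p i then Odd #{x | f x = i} else Even #{x | f x = i}} =
      ∑ t ∈ (univ.filter p).powerset, ∑ u ∈ (univ.filter (¬p ·)).powerset,
        (-1) ^ #t * (Fintype.card ι - 2 * (#t + #u) : R) ^ Fintype.card α := by
  classical
  rw [Nat.card_eq_fintype_card, Fintype.card_subtype, card_filter, Nat.cast_sum, mul_sum]
  simp_rw [Nat.cast_ite, Nat.cast_one, Nat.cast_zero, mul_ite, mul_one, mul_zero,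
    ite_parity_card_fiber_eq_sum_powerset]
  rw [sum_comm]
  refine sum_congr rfl fun t ht => ?_
  rw [sum_comm]
  refine sum_congr rfl fun u hu => ?_
  rw [← mul_sum, sum_prod_neg_one_pow_card_fiber, card_union_of_disjoint
    ((disjoint_filter_filter_not _ _ p).mono (mem_powerset.1 ht) (mem_powerset.1 hu)), Nat.cast_add]

theorem two_pow_mul_card_parity_fibers :
    (2 ^ Fintype.card ι : R) *
        Nat.card {f : α → ι // ∀ i, if p i then Odd #{x | f x = i} else Even #{x | f x = i}} =
      ∑ n₁ ∈ range (#{i | p i} + 1), ∑ n₂ ∈ range (#{i | ¬p i} + 1),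
        (-1) ^ n₁ * (Nat.choose #{i | p i} n₁) * (Nat.choose #{i | ¬p i} n₂) *
          (Fintype.card ι - 2 * n₁ - 2 * n₂ : R) ^ Fintype.card α := by
  rw [two_pow_mul_card_parity_fibers_eq_sum_powerset, sum_powerset_apply_card fun n₁ =>
    ∑ u ∈ (univ.filter (¬p ·)).powerset,
      (-1) ^ n₁ * (Fintype.card ι - 2 * (n₁ + #u) : R) ^ Fintype.card α]
  refine sum_congr rfl fun n₁ _ => ?_
  rw [sum_powerset_apply_card fun n₂ =>
    (-1) ^ n₁ * (Fintype.card ι - 2 * (n₁ + n₂) : R) ^ Fintype.card α, smul_sum]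
  refine sum_congr rfl fun n₂ _ => ?_
  simp only [nsmul_eq_mul]
  ring

end FiberParity

theorem stmt5 (m ℓ r : ℕ) (hr : r ≤ m) :
    (Nat.card {f : Fin ℓ → Fin m //
        ∀ i : Fin m, if (i : ℕ) < r
          then Odd (Finset.univ.filter (fun x => f x = i)).card
          else Even (Finset.univ.filter (fun x => f x = i)).card} : ℚ)
      = (2 ^ m : ℚ)⁻¹ * ∑ n₁ ∈ Finset.range (r + 1), ∑ n₂ ∈ Finset.range (m - r + 1),
          (-1 : ℚ) ^ n₁ * (r.choose n₁) * ((m - r).choose n₂) *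
            ((m : ℚ) - 2 * n₁ - 2 * n₂) ^ ℓ := by
  have hlt : #{i : Fin m | (i : ℕ) < r} = r := by rw [Fin.card_filter_val_lt, min_eq_right hr]
  have hge : #{i : Fin m | ¬(i : ℕ) < r} = m - r := by
    rw [filter_not, card_sdiff_of_subset (filter_subset _ _), hlt, card_univ, Fintype.card_fin]
  have key := two_pow_mul_card_parity_fibers (R := ℚ) (α := Fin ℓ) (fun i : Fin m => (i : ℕ) < r)
  rw [hlt, hge, Fintype.card_fin, Fintype.card_fin] at key
  rw [← key, inv_mul_cancel_left₀ (by positivity)]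
end

section
/- Fix m ≥ 1 and a symmetric m×m matrix A with entries in {0,1} and zero diagonal. Let R be a (not necessarily commutative) ring containing elements z_1, …, z_m with z_i² = 1 for all i and z_i z_j = (−1)^{A_{ij}} z_j z_i for all i ≠ j. Then for every k ≥ 0, (z_1 + … + z_m)^k = ∑_{y ∈ {0,1}^m} β_G^{(k)}(y) · z_1^{y_1} z_2^{y_2} ⋯ z_m^{y_m}, where the product is taken in increasing index order and integer coefficients act by repeated addition. Moreover β_G^{(k)}(y) = 0 whenever the Hamming weight of y exceeds k. -/
/-- The sign of a sequence `τ` with respect to the anticommutation graph given by `A`: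
`(-1)^N` where `N` is the number of pairs `s < t` with `τ s > τ t` that are edges. -/
def sgnG {m k : ℕ} (A : Fin m → Fin m → Bool) (τ : Fin k → Fin m) : ℤ :=
  (-1 : ℤ) ^ (Finset.univ.filter (fun p : Fin k × Fin k =>
    p.1 < p.2 ∧ τ p.2 < τ p.1 ∧ A (τ p.1) (τ p.2) = true)).card

/-- `Σ_G(μ)`: the sum of `sgnG` over all sequences of length `∑ μ i` in which each
value `i` appears exactly `μ i` times. -/
def SigmaG (m : ℕ) (A : Fin m → Fin m → Bool) (μ : Fin m → ℕ) : ℤ :=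
  ∑ τ ∈ Finset.univ.filter (fun τ : Fin (∑ i, μ i) → Fin m =>
      ∀ i : Fin m, (Finset.univ.filter (fun s => τ s = i)).card = μ i),
    sgnG A τ

/-- `β_G^{(k)}(y)`: the sum of `Σ_G(μ)` over all `μ` with `∑ μ = k` and `μ i ≡ y i (mod 2)`. -/
def betaG (m : ℕ) (A : Fin m → Fin m → Bool) (k : ℕ) (y : Fin m → Bool) : ℤ :=
  ∑ μ ∈ (Finset.Nat.antidiagonalTuple m k).filter
      (fun μ => ∀ i, μ i % 2 = if y i then 1 else 0),
    SigmaG m A μ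

/-! Expand `(∑ zᵢ)^k` into the words `z_{τ 1} ⋯ z_{τ k}` and normalise each word by
induction on its length. Prepending a letter `j` to a word `τ` multiplies `sgn_G` by `(-1)`
to the number of letters `i < j` of `τ` adjacent to `j`, and the parity of that number depends
only on the parity vector of `τ`. Moving `z_j` to its place in the ordered monomial of that
parity vector produces exactly this sign, and `z_j² = 1` flips the `j`-th parity. Grouping
words by parity vector gives `β_G^{(k)}`; a word of length `k` has at most `k` letters of odd
multiplicity. -/

open Finset

section Occurrences

variable {m k : ℕ}

def occurrences (τ : Fin k → Fin m) (i : Fin m) : ℕ := #{s | τ s = i}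

def oddOccurrences (τ : Fin k → Fin m) (i : Fin m) : Bool := occurrences τ i % 2 = 1

theorem occurrences_cons (j : Fin m) (τ : Fin k → Fin m) (i : Fin m) :
    occurrences (Fin.cons j τ) i = occurrences τ i + if j = i then 1 else 0 := by
  simp only [occurrences, card_filter, Fin.sum_univ_succ, Fin.cons_zero, Fin.cons_succ]
  ring

theorem oddOccurrences_cons (j : Fin m) (τ : Fin k → Fin m) :
    oddOccurrences (Fin.cons j τ) =
      Function.update (oddOccurrences τ) j (!oddOccurrences τ j) := by
  funext i
  rcases eq_or_ne i j with rfl | hij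
  · rcases Nat.mod_two_eq_zero_or_one (occurrences τ i) with h | h <;>
      simp [oddOccurrences, occurrences_cons, Nat.add_mod, h]
  · simp [oddOccurrences, occurrences_cons, hij, hij.symm]

theorem sum_occurrences (τ : Fin k → Fin m) : ∑ i, occurrences τ i = k := by
  simpa [occurrences] using sum_card_fiberwise_eq_card_filter univ univ τ

theorem oddOccurrences_eq_iff (τ : Fin k → Fin m) (y : Fin m → Bool) :
    oddOccurrences τ = y ↔ ∀ i, occurrences τ i % 2 = if y i then 1 else 0 := by
  simp only [funext_iff, oddOccurrences]
  refine forall_congr' fun i => ?_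
  cases y i <;> simp

theorem card_oddOccurrences_le (τ : Fin k → Fin m) : #{i | oddOccurrences τ i} ≤ k := by
  have hsub : ({i | oddOccurrences τ i} : Finset (Fin m)) ⊆ univ.image τ := by
    intro i hi
    have hodd : occurrences τ i % 2 = 1 := of_decide_eq_true (mem_filter.mp hi).2
    have hpos : 0 < occurrences τ i := by omega
    obtain ⟨s, hs⟩ := card_pos.mp hpos
    exact mem_image.mpr ⟨s, mem_univ s, (mem_filter.mp hs).2⟩
  calc #{i | oddOccurrences τ i} ≤ #(univ.image τ) := card_le_card hsub
    _ ≤ #(univ : Finset (Fin k)) := card_image_le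
    _ = k := card_fin k

theorem neg_one_pow_card_filter_comp (τ : Fin k → Fin m) (p : Fin m → Prop) [DecidablePred p] :
    (-1 : ℤ) ^ #{s | p (τ s)} = (-1) ^ #{i | p i ∧ oddOccurrences τ i} := by
  have hfiber : #{s | p (τ s)} = ∑ i with p i, occurrences τ i := by
    simpa [occurrences] using (sum_card_fiberwise_eq_card_filter univ {i | p i} τ).symm
  rw [hfiber, ← prod_pow_eq_pow_sum]
  simp only [neg_one_pow_eq_ite, prod_ite, prod_const_one, one_mul, prod_const, filter_filter,
    Nat.not_even_iff, oddOccurrences, decide_eq_true_eq]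

theorem sgnG_cons (A : Fin m → Fin m → Bool) (j : Fin m) (τ : Fin k → Fin m) :
    sgnG A (Fin.cons j τ) = (-1 : ℤ) ^ #{s | τ s < j ∧ A j (τ s)} * sgnG A τ := by
  simp only [sgnG, ← pow_add, card_filter, Fintype.sum_prod_type, Fin.sum_univ_succ,
    Fin.cons_zero, Fin.cons_succ, Fin.succ_lt_succ_iff, lt_self_iff_false, Fin.not_lt_zero,
    Fin.succ_pos]
  simp

end Occurrences

theorem sum_pow_eq_sum_prod_ofFn {ι R : Type*} [Fintype ι] [Semiring R] (f : ι → R) (k : ℕ) :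
    (∑ i, f i) ^ k = ∑ τ : Fin k → ι, (List.ofFn (f ∘ τ)).prod := by
  induction k with
  | zero => simp
  | succ k ih =>
    rw [pow_succ', ih, sum_mul_sum, ← Fintype.sum_prod_type',
      ← (Fin.consEquiv fun _ => ι).sum_comp]
    simp [Fin.consEquiv, List.ofFn_succ, Function.comp_def]

section AnticommutingInvolutions

variable {ι R : Type*} [Ring R]

theorem mul_ite_self {x : R} (hx : x ^ 2 = 1) (b : Bool) :
    x * (if b then x else 1) = if !b then x else 1 := by
  cases b <;> simp [← sq, hx]

theorem mul_ite_comm_of_ne (A : ι → ι → Bool) (z : ι → R)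
    (hzz : ∀ i j, i ≠ j → z i * z j = if A i j then -(z j * z i) else z j * z i)
    {i j : ι} (hij : i ≠ j) (b : Bool) :
    z j * (if b then z i else 1) =
      (-1 : ℤ) ^ (if b && A j i then 1 else 0) • ((if b then z i else 1) * z j) := by
  cases b <;> cases h : A j i <;> simp [hzz j i hij.symm, h]

theorem mul_prod_map_ite_of_sorted [LinearOrder ι] (A : ι → ι → Bool) (z : ι → R)
    (hz2 : ∀ i, z i ^ 2 = 1)
    (hzz : ∀ i j, i ≠ j → z i * z j = if A i j then -(z j * z i) else z j * z i)
    (y : ι → Bool) (j : ι) {L : List ι} (hL : L.Pairwise (· < ·)) (hj : j ∈ L) :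
    z j * (L.map fun i => if y i then z i else 1).prod =
      (-1 : ℤ) ^ L.countP (fun i => (i < j ∧ A j i) ∧ y i) •
        (L.map fun i => if Function.update y j (!y j) i then z i else 1).prod := by
  induction L with
  | nil => cases hj
  | cons a L ih =>
    rw [List.pairwise_cons] at hL
    rcases eq_or_ne a j with rfl | haj
    · have hcount : (a :: L).countP (fun i => (i < a ∧ A a i) ∧ y i) = 0 :=
        List.countP_eq_zero.2 fun i hi => by
          rcases List.mem_cons.mp hi with rfl | hi
          · simp
          · simp [(hL.1 i hi).not_gt]
      have htail : (L.map fun i => if Function.update y a (!y a) i then z i else 1) =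
          L.map fun i => if y i then z i else 1 :=
        List.map_congr_left fun i hi => by rw [Function.update_of_ne (hL.1 i hi).ne']
      rw [hcount, pow_zero, one_zsmul, List.map_cons, List.map_cons, List.prod_cons,
        List.prod_cons, htail, ← mul_assoc, mul_ite_self (hz2 a), Function.update_self]
    · have hjL : j ∈ L := (List.mem_cons.mp hj).resolve_left (Ne.symm haj)
      rw [List.map_cons, List.prod_cons, ← mul_assoc, mul_ite_comm_of_ne A z hzz haj,
        smul_mul_assoc, mul_assoc, ih hL.2 hjL, mul_smul_comm, smul_smul, ← pow_add,
        List.countP_cons, List.map_cons, List.prod_cons, Function.update_of_ne haj]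
      simp [hL.1 j hjL, Bool.and_comm, add_comm]

end AnticommutingInvolutions

def orderedMonomial {m : ℕ} {R : Type*} [Monoid R] (z : Fin m → R) (y : Fin m → Bool) : R :=
  ((List.finRange m).map fun i => if y i then z i else 1).prod

section

variable {m : ℕ} {R : Type*} [Ring R]

theorem mul_orderedMonomial (A : Fin m → Fin m → Bool) (z : Fin m → R)
    (hz2 : ∀ i, z i ^ 2 = 1)
    (hzz : ∀ i j, i ≠ j → z i * z j = if A i j then -(z j * z i) else z j * z i)
    (j : Fin m) (y : Fin m → Bool) :
    z j * orderedMonomial z y =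
      (-1 : ℤ) ^ #{i | (i < j ∧ A j i) ∧ y i} •
        orderedMonomial z (Function.update y j (!y j)) := by
  rw [orderedMonomial, mul_prod_map_ite_of_sorted A z hz2 hzz y j (List.pairwise_lt_finRange m)
    (List.mem_finRange j), ← (List.nodup_finRange m).card_eq_countP, List.toFinset_finRange]
  rfl

theorem prod_ofFn_eq_sgnG_smul (A : Fin m → Fin m → Bool) (z : Fin m → R)
    (hz2 : ∀ i, z i ^ 2 = 1)
    (hzz : ∀ i j, i ≠ j → z i * z j = if A i j then -(z j * z i) else z j * z i)
    {k : ℕ} (τ : Fin k → Fin m) :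
    (List.ofFn (z ∘ τ)).prod = sgnG A τ • orderedMonomial z (oddOccurrences τ) := by
  induction τ using Fin.consInduction with
  | elim0 => simp [sgnG, orderedMonomial, oddOccurrences, occurrences]
  | cons j τ ih =>
    rw [List.ofFn_succ, List.prod_cons]
    simp only [Function.comp_apply, Fin.cons_zero, Fin.cons_succ]
    rw [← Function.comp_def, ih, mul_smul_comm, mul_orderedMonomial A z hz2 hzz, smul_smul,
      sgnG_cons, neg_one_pow_card_filter_comp τ (fun i => i < j ∧ A j i), oddOccurrences_cons,
      mul_comm]

end

section

variable {m : ℕ} (A : Fin m → Fin m → Bool)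

theorem SigmaG_eq_sum_sgnG {k : ℕ} (μ : Fin m → ℕ) (hμ : ∑ i, μ i = k) :
    SigmaG m A μ = ∑ τ : Fin k → Fin m with occurrences τ = μ, sgnG A τ := by
  subst hμ
  simp only [SigmaG, funext_iff]
  rfl

theorem betaG_eq_sum_sgnG (k : ℕ) (y : Fin m → Bool) :
    betaG m A k y = ∑ τ : Fin k → Fin m with oddOccurrences τ = y, sgnG A τ := by
  have hmaps : ∀ τ ∈ ({τ | oddOccurrences τ = y} : Finset (Fin k → Fin m)),
      occurrences τ ∈ (Nat.antidiagonalTuple m k).filter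
        (fun μ => ∀ i, μ i % 2 = if y i then 1 else 0) := by
    intro τ hτ
    rw [mem_filter] at hτ ⊢
    exact ⟨Nat.mem_antidiagonalTuple.2 (sum_occurrences τ),
      (oddOccurrences_eq_iff τ y).1 hτ.2⟩
  rw [betaG, ← sum_fiberwise_of_maps_to hmaps]
  refine sum_congr rfl fun μ hμ => ?_
  rw [mem_filter, Nat.mem_antidiagonalTuple] at hμ
  rw [SigmaG_eq_sum_sgnG A μ hμ.1, filter_filter]
  refine sum_congr (filter_congr fun τ _ => ?_) fun _ _ => rfl
  exact ⟨fun h => ⟨(oddOccurrences_eq_iff τ y).2 (h ▸ hμ.2), h⟩, And.right⟩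

theorem betaG_eq_zero_of_lt_card {k : ℕ} (y : Fin m → Bool) (hy : k < #{i | y i}) :
    betaG m A k y = 0 := by
  rw [betaG_eq_sum_sgnG]
  refine sum_eq_zero fun τ hτ => absurd ?_ hy.not_ge
  exact (mem_filter.1 hτ).2 ▸ card_oddOccurrences_le τ

theorem sum_pow_eq_sum_betaG_smul {R : Type*} [Ring R] (z : Fin m → R) (hz2 : ∀ i, z i ^ 2 = 1)
    (hzz : ∀ i j, i ≠ j → z i * z j = if A i j then -(z j * z i) else z j * z i) (k : ℕ) :
    (∑ i, z i) ^ k = ∑ y, betaG m A k y • orderedMonomial z y :=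
  calc (∑ i, z i) ^ k
        = ∑ τ : Fin k → Fin m, sgnG A τ • orderedMonomial z (oddOccurrences τ) := by
        rw [sum_pow_eq_sum_prod_ofFn]
        exact sum_congr rfl fun τ _ => prod_ofFn_eq_sgnG_smul A z hz2 hzz τ
    _ = ∑ y, betaG m A k y • orderedMonomial z y := by
        rw [← sum_fiberwise univ oddOccurrences]
        refine sum_congr rfl fun y _ => ?_
        rw [betaG_eq_sum_sgnG, sum_smul]
        exact sum_congr rfl fun τ hτ => by rw [(mem_filter.1 hτ).2]

end

theorem stmt6_general (m : ℕ) (A : Fin m → Fin m → Bool)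
    (R : Type*) [Ring R] (z : Fin m → R) (hz2 : ∀ i, z i ^ 2 = 1)
    (hzz : ∀ i j, i ≠ j → z i * z j = if A i j then -(z j * z i) else z j * z i)
    (k : ℕ) :
    ((∑ i, z i) ^ k = ∑ y : Fin m → Bool, betaG m A k y •
        ((List.finRange m).map (fun i => if y i then z i else 1)).prod) ∧
    ∀ y : Fin m → Bool,
      k < (Finset.univ.filter (fun i => y i = true)).card → betaG m A k y = 0 :=
  ⟨sum_pow_eq_sum_betaG_smul A z hz2 hzz k, betaG_eq_zero_of_lt_card A⟩

theorem stmt6 (m : ℕ) (hm : 1 ≤ m) (A : Fin m → Fin m → Bool)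
    (hsymm : ∀ i j, A i j = A j i) (hdiag : ∀ i, A i i = false)
    (R : Type*) [Ring R] (z : Fin m → R) (hz2 : ∀ i, z i ^ 2 = 1)
    (hzz : ∀ i j, i ≠ j → z i * z j = if A i j then -(z j * z i) else z j * z i)
    (k : ℕ) :
    ((∑ i, z i) ^ k = ∑ y : Fin m → Bool, betaG m A k y •
        ((List.finRange m).map (fun i => if y i then z i else 1)).prod) ∧
    ∀ y : Fin m → Bool,
      k < (Finset.univ.filter (fun i => y i = true)).card → betaG m A k y = 0 :=
  stmt6_general m A R z hz2 hzz k
end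

section
/- Fix m ≥ 1 and a symmetric m×m matrix A with entries in {0,1} and zero diagonal. Then for every nonzero μ ∈ ℤ_{≥0}^m, Σ_G(μ) = ∑_{j : μ_j ≥ 1} (−1)^{s_j(μ)} · Σ_G(μ − 𝟙_j), where 𝟙_j is the j-th standard basis vector of ℤ^m and s_j(μ) := ∑_{i > j} A_{ij}·μ_i (so (−1)^{s_j(μ)} depends only on the parity of s_j(μ)). Moreover Σ_G(0) = 1. -/
/-!
Sort the sequences of content `μ` by their last letter `j`. Deleting it leaves an arbitrary
sequence of content `μ - 𝟙_j`, and appending `j` creates one edge inversion for each earlier letter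
`i > j` adjacent to `j`, that is `s_j(μ)` of them; so the sign changes by `(-1) ^ s_j(μ)`.
-/

open Finset Function

section

variable {m n : ℕ}

def valueCount (τ : Fin n → Fin m) (i : Fin m) : ℕ := #{s | τ s = i}

def edgeInversions (A : Fin m → Fin m → Bool) (τ : Fin n → Fin m) : Finset (Fin n × Fin n) :=
  {p | p.1 < p.2 ∧ τ p.2 < τ p.1 ∧ A (τ p.1) (τ p.2) = true}

/-- `SigmaG` with the length of the sequences as a separate parameter, so that recursing on it
needs no casts along `∑ i, μ i = n + 1`. -/
def signedCount (A : Fin m → Fin m → Bool) (n : ℕ) (μ : Fin m → ℕ) : ℤ :=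
  ∑ τ : Fin n → Fin m with ∀ i, valueCount τ i = μ i, sgnG A τ

lemma SigmaG_eq_signedCount (A : Fin m → Fin m → Bool) {μ : Fin m → ℕ} (h : ∑ i, μ i = n) :
    SigmaG m A μ = signedCount A n μ := by
  subst h; rfl

lemma signedCount_zero (A : Fin m → Fin m → Bool) : signedCount A 0 0 = 1 := by
  simp [signedCount, valueCount, sgnG]

lemma valueCount_snoc (σ : Fin n → Fin m) (j i : Fin m) :
    valueCount (Fin.snoc σ j : Fin (n + 1) → Fin m) i = valueCount σ i + if i = j then 1 else 0 := by
  rw [valueCount, valueCount, card_filter, card_filter, Fin.sum_univ_castSucc]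
  simp [eq_comm]

lemma valueCount_snoc_eq_iff (σ : Fin n → Fin m) (j : Fin m) (μ : Fin m → ℕ) :
    (∀ i, valueCount (Fin.snoc σ j : Fin (n + 1) → Fin m) i = μ i) ↔
      1 ≤ μ j ∧ ∀ i, valueCount σ i = update μ j (μ j - 1) i := by
  simp only [valueCount_snoc]
  constructor
  · intro h
    refine ⟨by have := h j; simp at this; omega, fun i => ?_⟩
    have := h i
    rcases eq_or_ne i j with rfl | hij
    · simp at this; simp; omega
    · simpa [hij] using this
  · rintro ⟨hj, h⟩ i
    rcases eq_or_ne i j with rfl | hij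
    · simp [h i]; omega
    · simp [h i, hij]

lemma card_filter_comp_eq_sum_valueCount (σ : Fin n → Fin m) (P : Fin m → Prop)
    [DecidablePred P] : #{s | P (σ s)} = ∑ i with P i, valueCount σ i := by
  rw [card_eq_sum_card_fiberwise (f := σ) (t := {i | P i}) fun s hs => by simp_all]
  refine sum_congr rfl fun i hi => ?_
  rw [valueCount, filter_filter]
  congr 1; ext s
  simp_all

lemma card_edgeInversions_snoc (A : Fin m → Fin m → Bool) (σ : Fin n → Fin m) (j : Fin m) :
    #(edgeInversions A (Fin.snoc σ j : Fin (n + 1) → Fin m)) =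
      #(edgeInversions A σ) + #{s | j < σ s ∧ A (σ s) j = true} := by
  simp only [edgeInversions, card_filter, Fintype.sum_prod_type, Fin.sum_univ_castSucc (n := n)]
  simp [Fin.snoc_castSucc, Fin.snoc_last, Fin.castSucc_lt_castSucc_iff, Fin.castSucc_lt_last,
    sum_add_distrib, not_lt_of_ge (Fin.le_last _)]

lemma sgnG_snoc (A : Fin m → Fin m → Bool) (σ : Fin n → Fin m) (j : Fin m) :
    sgnG A (Fin.snoc σ j : Fin (n + 1) → Fin m) =
      (-1) ^ (∑ i with j < i, if A i j then valueCount σ i else 0) * sgnG A σ := by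
  have h := card_edgeInversions_snoc A σ j
  rw [card_filter_comp_eq_sum_valueCount σ (fun i => j < i ∧ A i j = true), ← filter_filter,
    sum_filter] at h
  rw [sgnG, sgnG, ← edgeInversions, ← edgeInversions, h, pow_add, mul_comm]

lemma signedCount_succ (A : Fin m → Fin m → Bool) (n : ℕ) (μ : Fin m → ℕ) :
    signedCount A (n + 1) μ = ∑ j with 1 ≤ μ j,
      (-1) ^ (∑ i with j < i, if A i j then μ i else 0) *
        signedCount A n (update μ j (μ j - 1)) := by
  rw [signedCount, sum_filter, ← (Fin.snocEquiv fun _ => Fin m).sum_comp, Fintype.sum_prod_type,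
    sum_filter]
  refine sum_congr rfl fun j _ => ?_
  have hsnoc : ∀ σ : Fin n → Fin m, (Fin.snocEquiv fun _ => Fin m) (j, σ) = Fin.snoc σ j :=
    fun _ => rfl
  simp only [hsnoc, valueCount_snoc_eq_iff]
  split_ifs with hj
  · simp only [hj, true_and]
    rw [signedCount, mul_sum, ← sum_filter]
    refine sum_congr rfl fun σ hσ => ?_
    rw [sgnG_snoc]
    congr 2
    refine sum_congr rfl fun i hi => ?_
    rw [(mem_filter.1 hσ).2 i, update_of_ne (mem_filter.1 hi).2.ne']
  · simp [hj]

lemma sum_update_sub_one_add_one {ι : Type*} [Fintype ι] [DecidableEq ι] (μ : ι → ℕ) {j : ι}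
    (hj : 1 ≤ μ j) : ∑ i, update μ j (μ j - 1) i + 1 = ∑ i, μ i := by
  rw [sum_update_of_mem (mem_univ j), ← add_sum_erase univ μ (mem_univ j), sdiff_singleton_eq_erase]
  omega

end

theorem stmt7_general (m : ℕ) (A : Fin m → Fin m → Bool) :
    (∀ μ : Fin m → ℕ, μ ≠ 0 →
      SigmaG m A μ = ∑ j ∈ Finset.univ.filter (fun j => 1 ≤ μ j),
        (-1 : ℤ) ^ (∑ i ∈ Finset.univ.filter (fun i => j < i),
            (if A i j then μ i else 0)) *
          SigmaG m A (Function.update μ j (μ j - 1))) ∧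
    SigmaG m A 0 = 1 := by
  refine ⟨fun μ hμ => ?_, by rw [SigmaG_eq_signedCount A (n := 0) (by simp), signedCount_zero]⟩
  obtain ⟨n, hn⟩ : ∃ n, ∑ i, μ i = n + 1 := Nat.exists_eq_add_one.2 <| Nat.pos_of_ne_zero
    fun h => hμ <| funext fun i => sum_eq_zero_iff.1 h i (mem_univ i)
  rw [SigmaG_eq_signedCount A hn, signedCount_succ]
  refine sum_congr rfl fun j hj => ?_
  have hsum := sum_update_sub_one_add_one μ (mem_filter.1 hj).2
  rw [SigmaG_eq_signedCount A (n := n) (by omega)]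

theorem stmt7 (m : ℕ) (hm : 1 ≤ m) (A : Fin m → Fin m → Bool)
    (hsymm : ∀ i j, A i j = A j i) (hdiag : ∀ i, A i i = false) :
    (∀ μ : Fin m → ℕ, μ ≠ 0 →
      SigmaG m A μ = ∑ j ∈ Finset.univ.filter (fun j => 1 ≤ μ j),
        (-1 : ℤ) ^ (∑ i ∈ Finset.univ.filter (fun i => j < i),
            (if A i j then μ i else 0)) *
          SigmaG m A (Function.update μ j (μ j - 1))) ∧
    SigmaG m A 0 = 1 :=
  stmt7_general m A
end

section
/- Fix m ≥ 1 and a symmetric m×m matrix A with entries in {0,1} and zero diagonal, defining a graph G on {1,…,m} with edges {i,j} whenever A_{ij} = 1. Suppose the connected components of G have vertex sets V_1, …, V_r. Define α_G(μ) := (μ_1! ⋯ μ_m!)·Σ_G(μ)/|μ|! ∈ ℚ. Then for every μ ∈ ℤ_{≥0}^m, α_G(μ) = ∏_{t=1}^{r} α_{G[V_t]}(μ|_{V_t}), where G[V_t] is the induced subgraph of G on V_t and μ|_{V_t} is the restriction of μ to the indices in V_t. -/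
/-- The antisymmetry character `α_G(μ) = (μ₁! ⋯ μ_m!) · Σ_G(μ) / |μ|!`. -/
def alphaG (m : ℕ) (A : Fin m → Fin m → Bool) (μ : Fin m → ℕ) : ℚ :=
  (∏ i, ((μ i).factorial : ℚ)) * (SigmaG m A μ : ℚ) / ((∑ i, μ i).factorial : ℚ)

/-!
Conditioning on the last letter of the word gives the recursion
`|μ| α_G(μ) = ∑ᵢ μᵢ εᵢ α_G(μ - eᵢ)`, where `εᵢ = appendSign A (μ - eᵢ) i` is the sign picked up
by appending the letter `i` to a word of content `μ - eᵢ`: one factor `-1` for each earlier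
larger letter adjacent to `i`. (Here `μ - eᵢ` is `Function.update μ i (μ i - 1)`.)
All neighbours of `i` lie in the component of `i`, so `εᵢ` is computed inside that component.
Hence the product of the characters of the components satisfies the same recursion (because
`∑ₜ |μ|_{Vₜ}| = |μ|`) and takes the same value `1` at `μ = 0`; induction on `|μ|` concludes.
-/

open Finset
open scoped Nat

section Words

variable {k m : ℕ}

def content (τ : Fin k → Fin m) (i : Fin m) : ℕ := #{s | τ s = i}

def appendSign (A : Fin m → Fin m → Bool) (ν : Fin m → ℕ) (x : Fin m) : ℤ :=
  (-1) ^ ∑ j ∈ {j | x < j ∧ A j x = true}, ν j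

lemma content_snoc (σ : Fin k → Fin m) (x : Fin m) :
    content (Fin.snoc σ x : Fin (k + 1) → Fin m) =
      Function.update (content σ) x (content σ x + 1) := by
  ext i
  simp only [content, card_filter, Fin.sum_univ_castSucc, Fin.snoc_castSucc, Fin.snoc_last,
    Function.update_apply]
  split_ifs <;> simp_all [eq_comm]

lemma content_snoc_eq_iff (σ : Fin k → Fin m) (x : Fin m) (μ : Fin m → ℕ) :
    content (Fin.snoc σ x : Fin (k + 1) → Fin m) = μ ↔
      μ x ≠ 0 ∧ content σ = Function.update μ x (μ x - 1) := by
  simp only [content_snoc, funext_iff, Function.update_apply]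
  grind

lemma card_filter_mem_eq_sum_content (σ : Fin k → Fin m) (T : Finset (Fin m)) :
    #{s | σ s ∈ T} = ∑ j ∈ T, content σ j :=
  (sum_card_fiberwise_eq_card_filter _ _ _).symm

lemma sgnG_snoc_s8 (A : Fin m → Fin m → Bool) (σ : Fin k → Fin m) (x : Fin m) :
    sgnG A (Fin.snoc σ x : Fin (k + 1) → Fin m) = appendSign A (content σ) x * sgnG A σ := by
  have hlast : #{s | x < σ s ∧ A (σ s) x = true} =
      ∑ j ∈ {j | x < j ∧ A j x = true}, content σ j := by
    rw [← card_filter_mem_eq_sum_content]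
    simp
  simp only [sgnG, appendSign, ← hlast, ← pow_add]
  congr 1
  simp only [card_filter, Fintype.sum_prod_type, Fin.sum_univ_castSucc, Fin.snoc_castSucc,
    Fin.snoc_last, Fin.castSucc_lt_castSucc_iff, Fin.castSucc_lt_last, lt_irrefl]
  simp [sum_add_distrib, add_comm, fun i : Fin k => not_lt_of_ge (Fin.le_last i.castSucc)]

end Words

section Recursion

variable {m : ℕ}

lemma sum_update_pred (μ : Fin m → ℕ) {i : Fin m} (hi : μ i ≠ 0) :
    ∑ j, Function.update μ i (μ i - 1) j = ∑ j, μ j - 1 := by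
  rw [sum_update_of_mem (mem_univ i), ← add_sum_erase univ μ (mem_univ i),
    ← sdiff_singleton_eq_erase]
  omega

lemma prod_factorial_eq_mul_prod_factorial_update_pred (μ : Fin m → ℕ) {i : Fin m}
    (hi : μ i ≠ 0) :
    ∏ j, (μ j)! = μ i * ∏ j, (Function.update μ i (μ i - 1) j)! := by
  rw [← mul_prod_erase univ _ (mem_univ i), ← mul_prod_erase univ _ (mem_univ i),
    Function.update_self, ← mul_assoc, Nat.mul_factorial_pred hi]
  congr 1
  exact prod_congr rfl fun j hj => by rw [Function.update_of_ne (ne_of_mem_erase hj)]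

variable (A : Fin m → Fin m → Bool)

def signSum (k : ℕ) (μ : Fin m → ℕ) : ℤ :=
  ∑ τ ∈ {τ : Fin k → Fin m | ∀ i, content τ i = μ i}, sgnG A τ

lemma signSum_succ (k : ℕ) (μ : Fin m → ℕ) :
    signSum A (k + 1) μ = ∑ x, if μ x = 0 then 0 else
      appendSign A (Function.update μ x (μ x - 1)) x *
        signSum A k (Function.update μ x (μ x - 1)) := by
  simp only [signSum, sum_filter, ← funext_iff]
  rw [← (Fin.snocEquiv fun _ => Fin m).sum_comp, Fintype.sum_prod_type]
  refine sum_congr rfl fun x _ => ?_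
  change (∑ σ, if content (Fin.snoc σ x : Fin (k + 1) → Fin m) = μ then
    sgnG A (Fin.snoc σ x : Fin (k + 1) → Fin m) else 0) = _
  simp only [content_snoc_eq_iff, sgnG_snoc_s8]
  split_ifs with hx
  · simp [hx]
  · simp only [hx, ne_eq, not_false_eq_true, true_and, mul_sum, mul_ite, mul_zero]
    refine sum_congr rfl fun σ _ => ?_
    split_ifs with hσ
    · rw [hσ]
    · rfl

lemma alphaG_eq_signSum (μ : Fin m → ℕ) :
    alphaG m A μ = (∏ i, ((μ i)! : ℚ)) * signSum A (∑ i, μ i) μ / (∑ i, μ i)! := rfl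

lemma alphaG_zero : alphaG m A (fun _ => 0) = 1 := by
  rw [alphaG_eq_signSum, sum_const_zero]
  simp [signSum, sgnG, content]

lemma alphaG_recursion (μ : Fin m → ℕ) :
    (∑ i, μ i : ℚ) * alphaG m A μ =
      ∑ i, (μ i : ℚ) * appendSign A (Function.update μ i (μ i - 1)) i *
        alphaG m A (Function.update μ i (μ i - 1)) := by
  obtain hμ | ⟨k, hk⟩ : ∑ i, μ i = 0 ∨ ∃ k, ∑ i, μ i = k + 1 :=
    (Nat.eq_zero_or_eq_succ_pred _).imp id (⟨_, ·⟩)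
  · have : ∀ i, μ i = 0 := fun i => sum_eq_zero_iff.1 hμ i (mem_univ i)
    simp [this]
  rw [alphaG_eq_signSum, hk, signSum_succ, ← Nat.cast_sum, hk]
  push_cast
  rw [mul_sum, sum_div, mul_sum]
  refine sum_congr rfl fun i _ => ?_
  split_ifs with hi
  · simp [hi]
  rw [alphaG_eq_signSum, sum_update_pred μ hi, hk, Nat.add_sub_cancel, ← Nat.cast_prod,
    ← Nat.cast_prod, prod_factorial_eq_mul_prod_factorial_update_pred μ hi, Nat.factorial_succ]
  push_cast
  field_simp

end Recursion

lemma appendSign_orderEmbedding {m n : ℕ} (A : Fin m → Fin m → Bool) (e : Fin n ↪o Fin m)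
    (ν : Fin m → ℕ) (a : Fin n) (hA : ∀ j, A j (e a) = true → j ∈ Set.range e) :
    appendSign A ν (e a) = appendSign (fun a b => A (e a) (e b)) (fun b => ν (e b)) a := by
  have hfilter : ({j | e a < j ∧ A j (e a) = true} : Finset (Fin m))
      = ({b | a < b ∧ A (e b) (e a) = true} : Finset (Fin n)).map e.toEmbedding := by
    ext j
    simp only [mem_filter, mem_univ, true_and, mem_map, RelEmbedding.coe_toEmbedding]
    constructor
    · rintro ⟨hlt, hj⟩
      obtain ⟨b, rfl⟩ := hA j hj
      exact ⟨b, ⟨e.lt_iff_lt.1 hlt, hj⟩, rfl⟩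
    · rintro ⟨b, ⟨hlt, hb⟩, rfl⟩
      exact ⟨e.lt_iff_lt.2 hlt, hb⟩
  rw [appendSign, hfilter, sum_map]
  rfl

section Partition

variable {m r : ℕ} {n : Fin r → ℕ} {e : ∀ t, Fin (n t) ↪o Fin m}

lemma sum_eq_sum_sum_of_bijective {M : Type*} [AddCommMonoid M]
    (he : Function.Bijective fun p : (t : Fin r) × Fin (n t) => e p.1 p.2) (f : Fin m → M) :
    ∑ i, f i = ∑ t, ∑ a, f (e t a) :=
  (he.sum_comp f).symm.trans (Fintype.sum_sigma _)

lemma eq_of_apply_eq_of_bijective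
    (he : Function.Bijective fun p : (t : Fin r) × Fin (n t) => e p.1 p.2)
    {s t : Fin r} {a : Fin (n s)} {b : Fin (n t)} (h : e s a = e t b) : s = t :=
  congrArg Sigma.fst (@he.1 ⟨s, a⟩ ⟨t, b⟩ h)

lemma prod_update_of_bijective {R : Type*} [CommMonoid R]
    (he : Function.Bijective fun p : (t : Fin r) × Fin (n t) => e p.1 p.2)
    (F : ∀ t, (Fin (n t) → ℕ) → R) (μ : Fin m → ℕ) (t : Fin r) (a : Fin (n t)) (c : ℕ) :
    ∏ s, F s (fun b => Function.update μ (e t a) c (e s b))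
      = F t (Function.update (fun b => μ (e t b)) a c) *
          ∏ s ∈ univ.erase t, F s (fun b => μ (e s b)) := by
  rw [← mul_prod_erase univ _ (mem_univ t),
    Function.update_comp_eq_of_injective' μ (e t).injective]
  congr 1
  refine prod_congr rfl fun s hs => congrArg (F s) (funext fun b => Function.update_of_ne ?_ _ _)
  exact fun h => ne_of_mem_erase hs (eq_of_apply_eq_of_bijective he h)

lemma mem_range_of_adj_of_bijective {A : Fin m → Fin m → Bool}
    (he : Function.Bijective fun p : (t : Fin r) × Fin (n t) => e p.1 p.2)
    (hA : ∀ i j, A i j = true → ∃ t, i ∈ Set.range (e t) ∧ j ∈ Set.range (e t))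
    {t : Fin r} {a : Fin (n t)} {j : Fin m} (hj : A j (e t a) = true) : j ∈ Set.range (e t) := by
  obtain ⟨s, hjs, ⟨b, hb⟩⟩ := hA j _ hj
  obtain rfl : s = t := eq_of_apply_eq_of_bijective he hb
  exact hjs

lemma prod_alphaG_recursion (A : Fin m → Fin m → Bool)
    (he : Function.Bijective fun p : (t : Fin r) × Fin (n t) => e p.1 p.2)
    (hA : ∀ i j, A i j = true → ∃ t, i ∈ Set.range (e t) ∧ j ∈ Set.range (e t))
    (μ : Fin m → ℕ) :
    (∑ i, μ i : ℚ) * ∏ t, alphaG (n t) (fun a b => A (e t a) (e t b)) (fun a => μ (e t a)) =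
      ∑ i, (μ i : ℚ) * appendSign A (Function.update μ i (μ i - 1)) i *
        ∏ t, alphaG (n t) (fun a b => A (e t a) (e t b))
          (fun a => Function.update μ i (μ i - 1) (e t a)) := by
  calc (∑ i, μ i : ℚ) * ∏ t, alphaG (n t) (fun a b => A (e t a) (e t b)) (fun a => μ (e t a))
      = ∑ t, (∑ a, μ (e t a) : ℚ) * ∏ s, alphaG (n s) (fun a b => A (e s a) (e s b))
          (fun b => μ (e s b)) := by
        rw [← sum_mul, ← sum_eq_sum_sum_of_bijective he (fun i => (μ i : ℚ))]
    _ = ∑ t, (∑ a, (μ (e t a) : ℚ) * appendSign (fun a b => A (e t a) (e t b))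
            (Function.update (fun b => μ (e t b)) a (μ (e t a) - 1)) a
          * alphaG (n t) (fun a b => A (e t a) (e t b))
            (Function.update (fun b => μ (e t b)) a (μ (e t a) - 1)))
          * ∏ s ∈ univ.erase t, alphaG (n s) (fun a b => A (e s a) (e s b))
            (fun b => μ (e s b)) := by
        refine sum_congr rfl fun t _ => ?_
        rw [← alphaG_recursion, ← mul_prod_erase univ _ (mem_univ t), mul_assoc]
    _ = _ := by
        rw [sum_eq_sum_sum_of_bijective he]
        refine sum_congr rfl fun t _ => ?_
        rw [sum_mul]
        refine sum_congr rfl fun a _ => ?_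
        rw [appendSign_orderEmbedding A (e t) _ a
            (fun j => mem_range_of_adj_of_bijective he hA), prod_update_of_bijective he,
          Function.update_comp_eq_of_injective' μ (e t).injective]
        ring

theorem alphaG_eq_prod_of_bijective (A : Fin m → Fin m → Bool)
    (he : Function.Bijective fun p : (t : Fin r) × Fin (n t) => e p.1 p.2)
    (hA : ∀ i j, A i j = true → ∃ t, i ∈ Set.range (e t) ∧ j ∈ Set.range (e t))
    (μ : Fin m → ℕ) :
    alphaG m A μ = ∏ t, alphaG (n t) (fun a b => A (e t a) (e t b)) (fun a => μ (e t a)) := by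
  induction hμ : ∑ i, μ i generalizing μ with
  | zero =>
    obtain rfl : μ = fun _ => 0 := funext fun i => sum_eq_zero_iff.1 hμ i (mem_univ i)
    simp only [alphaG_zero, prod_const_one]
  | succ k ih =>
    have hμℚ : (∑ i, μ i : ℚ) = k + 1 := by exact_mod_cast hμ
    refine mul_left_cancel₀ (Nat.cast_add_one_ne_zero k : (k + 1 : ℚ) ≠ 0) ?_
    rw [← hμℚ, alphaG_recursion, prod_alphaG_recursion A he hA]
    refine sum_congr rfl fun i _ => ?_
    rcases eq_or_ne (μ i) 0 with hi | hi
    · simp [hi]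
    · rw [ih _ (by rw [sum_update_pred μ hi, hμ, Nat.add_sub_cancel])]

end Partition

lemma bijective_sigma_orderEmbOfFin {m r : ℕ} (V : Fin r → Finset (Fin m))
    (hpart : ∀ i, ∃! t, i ∈ V t) :
    Function.Bijective fun p : (t : Fin r) × Fin (V t).card => (V p.1).orderEmbOfFin rfl p.2 := by
  constructor
  · rintro ⟨s, a⟩ ⟨t, b⟩ (h : (V s).orderEmbOfFin rfl a = (V t).orderEmbOfFin rfl b)
    obtain rfl : s = t :=
      (hpart _).unique (orderEmbOfFin_mem _ rfl a) (h ▸ orderEmbOfFin_mem _ rfl b)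
    rw [((V s).orderEmbOfFin rfl).injective h]
  · intro i
    obtain ⟨t, hi, -⟩ := hpart i
    obtain ⟨a, ha⟩ : i ∈ Set.range ((V t).orderEmbOfFin rfl) := by
      rwa [range_orderEmbOfFin]
    exact ⟨⟨t, a⟩, ha⟩

theorem stmt8_general (m : ℕ) (A : Fin m → Fin m → Bool)
    (r : ℕ) (V : Fin r → Finset (Fin m))
    (hpart : ∀ i : Fin m, ∃! t, i ∈ V t)
    (hcomp : ∀ i j : Fin m,
      (SimpleGraph.fromRel (fun a b => A a b = true)).Reachable i j ↔
        ∃ t, i ∈ V t ∧ j ∈ V t)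
    (μ : Fin m → ℕ) :
    alphaG m A μ = ∏ t, alphaG (V t).card
      (fun a b => A ((V t).orderEmbOfFin rfl a) ((V t).orderEmbOfFin rfl b))
      (fun a => μ ((V t).orderEmbOfFin rfl a)) := by
  refine alphaG_eq_prod_of_bijective A (bijective_sigma_orderEmbOfFin V hpart)
    (fun i j hij => ?_) μ
  have hreach : (SimpleGraph.fromRel (fun a b => A a b = true)).Reachable i j := by
    rcases eq_or_ne i j with rfl | hne
    · rfl
    · exact (SimpleGraph.fromRel_adj _ i j |>.2 ⟨hne, Or.inl hij⟩).reachable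
  simpa only [range_orderEmbOfFin, Finset.mem_coe] using (hcomp i j).1 hreach

theorem stmt8 (m : ℕ) (hm : 1 ≤ m) (A : Fin m → Fin m → Bool)
    (hsymm : ∀ i j, A i j = A j i) (hdiag : ∀ i, A i i = false)
    (r : ℕ) (V : Fin r → Finset (Fin m))
    (hne : ∀ t, (V t).Nonempty)
    (hpart : ∀ i : Fin m, ∃! t, i ∈ V t)
    (hcomp : ∀ i j : Fin m,
      (SimpleGraph.fromRel (fun a b => A a b = true)).Reachable i j ↔
        ∃ t, i ∈ V t ∧ j ∈ V t)
    (μ : Fin m → ℕ) :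
    alphaG m A μ = ∏ t, alphaG (V t).card
      (fun a b => A ((V t).orderEmbOfFin rfl a) ((V t).orderEmbOfFin rfl b))
      (fun a => μ ((V t).orderEmbOfFin rfl a)) :=
  stmt8_general m A r V hpart hcomp μ
end

section
/- Fix m ≥ 1 and a symmetric m×m matrix A with entries in {0,1} and zero diagonal, defining a graph G on {1,…,m} with edges {i,j} whenever A_{ij} = 1. Suppose the connected components of G have vertex sets V_1, …, V_r. Then for every k ≥ 0 and every y ∈ {0,1}^m, β_G^{(k)}(y) = ∑_{κ ∈ ℤ_{≥0}^r, κ_1+…+κ_r = k} (k!/(κ_1! ⋯ κ_r!)) · ∏_{t=1}^{r} β_{G[V_t]}^{(κ_t)}(y|_{V_t}), where G[V_t] is the induced subgraph on V_t and y|_{V_t} is the restriction of y to the indices in V_t. -/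
/-!
No edge joins two components, so the sign of a word `τ` is the product of the signs of its
subwords on the components, and the parity condition on the letter counts splits in the same way.
Group the words by their pattern `c = comp ∘ τ : Fin k → Fin r`, where `comp i` is the component
of `i`. A word with pattern `c` amounts to an independent choice of a subword over `V t` on each
fibre `c⁻¹(t)`, so these words contribute `∏ t, β_{G[V_t]}^{(|c⁻¹(t)|)}`, and the patterns with
fibre sizes `κ` are counted by the multinomial coefficient `k! / ∏ t, κ_t!`.
-/

namespace GraphSign

open Finset Function
open scoped Nat

theorem sum_card_filter_eq {α : Type*} [Fintype α] [DecidableEq α] {n : ℕ} (τ : Fin n → α) :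
    ∑ i, #{s | τ s = i} = n := by
  rw [← card_eq_sum_card_fiberwise fun s _ => mem_univ (τ s), card_univ, Fintype.card_fin]

theorem SigmaG_eq_of_sum_eq {m n : ℕ} (A : Fin m → Fin m → Bool) (μ : Fin m → ℕ)
    (h : ∑ i, μ i = n) :
    SigmaG m A μ = ∑ τ : Fin n → Fin m with ∀ i, #{s | τ s = i} = μ i, sgnG A τ := by
  subst h; rfl

theorem betaG_eq_sum_sgnG (m : ℕ) (A : Fin m → Fin m → Bool) (k : ℕ) (y : Fin m → Bool) :
    betaG m A k y =
      ∑ τ : Fin k → Fin m with ∀ i, #{s | τ s = i} % 2 = if y i then 1 else 0, sgnG A τ := by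
  have hcount (μ : Fin m → ℕ) (τ : Fin k → Fin m) :
      (∀ i, #{s | τ s = i} = μ i) ↔ (fun i => #{s | τ s = i}) = μ := funext_iff.symm
  rw [betaG, sum_congr rfl fun μ hμ =>
    SigmaG_eq_of_sum_eq A μ (Nat.mem_antidiagonalTuple.mp (mem_filter.mp hμ).1)]
  simp_rw [hcount]
  rw [sum_fiberwise_eq_sum_filter]
  refine sum_congr (filter_congr fun τ _ => ?_) fun _ _ => rfl
  simp only [mem_filter, Nat.mem_antidiagonalTuple, sum_card_filter_eq τ, true_and]

theorem bijective_iff_card_filter_eq_one {α β : Type*} [Fintype α] [DecidableEq β]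
    (f : α → β) : Bijective f ↔ ∀ b, #{a | f a = b} = 1 := by
  simp only [Function.bijective_iff_existsUnique, card_eq_one, eq_singleton_iff_unique_mem,
    mem_filter, mem_univ, true_and]
  exact Iff.rfl

section Split

variable {k r : ℕ} (c : Fin k → Fin r)

def fiberCard (t : Fin r) : ℕ := #{s | c s = t}

def fiberIso (t : Fin r) : Fin (fiberCard c t) ≃o {s // s ∈ ({s | c s = t} : Finset (Fin k))} :=
  orderIsoOfFin _ rfl

def fiberEmb (t : Fin r) : Fin (fiberCard c t) ↪o Fin k :=
  (fiberIso c t).toOrderEmbedding.trans (OrderEmbedding.subtype _)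

theorem apply_fiberEmb (t : Fin r) (a : Fin (fiberCard c t)) : c (fiberEmb c t a) = t :=
  (mem_filter.mp (fiberIso c t a).2).2

def fiberIdx (s : Fin k) : Fin (fiberCard c (c s)) := (fiberIso c (c s)).symm ⟨s, by simp⟩

theorem fiberEmb_fiberIdx (s : Fin k) : fiberEmb c (c s) (fiberIdx c s) = s :=
  congrArg Subtype.val ((fiberIso c (c s)).apply_symm_apply _)

theorem exists_fiberEmb_eq {t : Fin r} {s : Fin k} (h : c s = t) : ∃ a, fiberEmb c t a = s := by
  subst h
  exact ⟨_, fiberEmb_fiberIdx c s⟩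

theorem sum_fiberCard : ∑ t, fiberCard c t = k :=
  sum_card_filter_eq c

theorem card_filter_lt_eq_sum_fiberCard (P : Fin k → Fin k → Prop) [DecidableRel P]
    (hP : ∀ s s', P s s' → c s = c s') :
    #{p : Fin k × Fin k | p.1 < p.2 ∧ P p.1 p.2} =
      ∑ t, #{q : Fin (fiberCard c t) × Fin (fiberCard c t) |
        q.1 < q.2 ∧ P (fiberEmb c t q.1) (fiberEmb c t q.2)} := by
  rw [card_eq_sum_card_fiberwise (f := fun p => c p.1) fun p _ => mem_univ _]
  refine sum_congr rfl fun t _ => (card_nbij (fun q => (fiberEmb c t q.1, fiberEmb c t q.2))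
    (fun q hq => ?_) (fun q _ q' _ h => ?_) fun p hp => ?_).symm
  · simp only [coe_filter, mem_filter, mem_univ, true_and, Set.mem_ofPred_eq] at hq ⊢
    exact ⟨⟨(fiberEmb c t).lt_iff_lt.mpr hq.1, hq.2⟩, apply_fiberEmb c t q.1⟩
  · simp only [Prod.ext_iff, (fiberEmb c t).injective.eq_iff] at h ⊢
    exact h
  · simp only [coe_filter, mem_filter, mem_univ, true_and, Set.mem_ofPred_eq] at hp
    obtain ⟨⟨hlt, hP'⟩, rfl⟩ := hp
    obtain ⟨a, ha⟩ := exists_fiberEmb_eq c rfl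
    obtain ⟨b, hb⟩ := exists_fiberEmb_eq c (hP _ _ hP').symm
    refine ⟨(a, b), ?_, by simp [ha, hb]⟩
    simp only [coe_filter, mem_univ, true_and, Set.mem_ofPred_eq, ha, hb,
      ← (fiberEmb c _).lt_iff_lt]
    exact ⟨hlt, hP'⟩

variable {Y : Type*} (d : Y → Fin r) {N : Fin r → ℕ} (e : ∀ t, Fin (N t) ≃ {i : Y // d i = t})

def glue (σ : ∀ t, Fin (fiberCard c t) → Fin (N t)) (s : Fin k) : Y :=
  e (c s) (σ (c s) (fiberIdx c s))

theorem glue_fiberEmb (σ : ∀ t, Fin (fiberCard c t) → Fin (N t)) (t : Fin r)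
    (a : Fin (fiberCard c t)) : glue c d e σ (fiberEmb c t a) = e t (σ t a) := by
  obtain ⟨s, hs⟩ : ∃ s, fiberEmb c t a = s := ⟨_, rfl⟩
  obtain rfl : c s = t := hs ▸ apply_fiberEmb c t a
  obtain rfl : a = fiberIdx c s := (fiberEmb c _).injective (hs.trans (fiberEmb_fiberIdx c s).symm)
  rw [hs]
  rfl

/-- A word whose letters lie in the blocks prescribed by `c` is the shuffle of its subwords
on the positions `c⁻¹(t)`, each read in the block `Fin (N t)`. -/
def splitEquiv :
    {τ : Fin k → Y // ∀ s, d (τ s) = c s} ≃ ∀ t, Fin (fiberCard c t) → Fin (N t) where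
  toFun τ t a := (e t).symm ⟨τ.1 (fiberEmb c t a), τ.2 _ ▸ apply_fiberEmb c t a⟩
  invFun σ := ⟨glue c d e σ, fun s => (e (c s) _).2⟩
  left_inv τ := by
    ext s
    simp [glue, fiberEmb_fiberIdx]
  right_inv σ := by
    funext t a
    rw [Equiv.symm_apply_eq, Subtype.ext_iff]
    exact glue_fiberEmb c d e σ t a

theorem coe_splitEquiv_apply (τ : {τ : Fin k → Y // ∀ s, d (τ s) = c s}) (t : Fin r)
    (a : Fin (fiberCard c t)) : (e t (splitEquiv c d e τ t a) : Y) = τ.1 (fiberEmb c t a) := by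
  simp [splitEquiv]

theorem sum_filter_eq_prod_sum [Fintype Y] {M : Type*} [CommSemiring M]
    (Q : (Fin k → Y) → Prop) [DecidablePred Q]
    (R : ∀ t, (Fin (fiberCard c t) → Fin (N t)) → Prop) [∀ t, DecidablePred (R t)]
    (F : (Fin k → Y) → M) (G : ∀ t, (Fin (fiberCard c t) → Fin (N t)) → M)
    (hQR : ∀ τ, Q τ.1 ↔ ∀ t, R t (splitEquiv c d e τ t))
    (hFG : ∀ τ, F τ.1 = ∏ t, G t (splitEquiv c d e τ t)) :
    ∑ τ : Fin k → Y with (∀ s, d (τ s) = c s) ∧ Q τ, F τ = ∏ t, ∑ σ with R t σ, G t σ := by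
  rw [prod_univ_sum]
  refine sum_bij' (fun τ hτ => splitEquiv c d e ⟨τ, (mem_filter.mp hτ).2.1⟩)
    (fun σ _ => ((splitEquiv c d e).symm σ).1) ?_ ?_ ?_ ?_ ?_
  · intro τ hτ
    simpa [Fintype.mem_piFinset] using (hQR ⟨τ, _⟩).mp (mem_filter.mp hτ).2.2
  · intro σ hσ
    have hR : ∀ t, R t (σ t) := by simpa [Fintype.mem_piFinset] using hσ
    simpa using ⟨((splitEquiv c d e).symm σ).2, (hQR _).mpr (by simpa using hR)⟩
  · intro τ hτ
    simp
  · intro σ hσ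
    simp
  · intro τ hτ
    exact hFG ⟨τ, _⟩

theorem card_filter_splitEquiv_eq [DecidableEq Y] (τ : {τ : Fin k → Y // ∀ s, d (τ s) = c s})
    (t : Fin r) (b : Fin (N t)) :
    #{a | splitEquiv c d e τ t a = b} = #{s | τ.1 s = e t b} := by
  refine card_nbij (fiberEmb c t) (fun a ha => ?_) (fiberEmb c t).injective.injOn fun s hs => ?_
  · simp only [coe_filter, mem_univ, true_and, Set.mem_ofPred_eq] at ha ⊢
    rw [← coe_splitEquiv_apply, ha]
  · simp only [coe_filter, mem_univ, true_and, Set.mem_ofPred_eq] at hs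
    obtain ⟨a, rfl⟩ := exists_fiberEmb_eq c ((τ.2 s).symm.trans (hs ▸ (e t b).2))
    refine ⟨a, ?_, rfl⟩
    simp only [coe_filter, mem_univ, true_and, Set.mem_ofPred_eq]
    rw [← (e t).injective.eq_iff, Subtype.ext_iff, coe_splitEquiv_apply, hs]

theorem forall_card_filter_iff [DecidableEq Y] (p : Y → ℕ → Prop)
    (τ : {τ : Fin k → Y // ∀ s, d (τ s) = c s}) :
    (∀ i, p i #{s | τ.1 s = i}) ↔ ∀ t b, p (e t b) #{a | splitEquiv c d e τ t a = b} := by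
  simp only [card_filter_splitEquiv_eq]
  refine ⟨fun h t b => h _, fun h i => ?_⟩
  simpa using h (d i) ((e (d i)).symm ⟨i, rfl⟩)

theorem bijective_iff_forall_bijective_splitEquiv [DecidableEq Y]
    (τ : {τ : Fin k → Y // ∀ s, d (τ s) = c s}) :
    Bijective τ.1 ↔ ∀ t, Bijective (splitEquiv c d e τ t) := by
  simp only [bijective_iff_card_filter_eq_one]
  exact forall_card_filter_iff c d e (fun _ n => n = 1) τ

end Split

theorem card_filter_bijective {α β : Type*} [Fintype α] [Fintype β] [DecidableEq α]
    [DecidableEq β] (h : Fintype.card α = Fintype.card β) :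
    #{f : α → β | Bijective f} = (Fintype.card α)! := by
  rw [← Fintype.card_subtype, Fintype.card_congr Equiv.bijectiveEquiv,
    Fintype.card_equiv (Fintype.equivOfCardEq h)]

/-- Double counting of the bijections `Fin k → Σ t, Fin (κ t)`, grouped by the word
`s ↦ (f s).1`. -/
theorem card_fiberCard_eq_mul_prod_factorial {k r : ℕ} (κ : Fin r → ℕ) (h : ∑ t, κ t = k) :
    #{c : Fin k → Fin r | fiberCard c = κ} * ∏ t, (κ t)! = k ! := by
  let e (t : Fin r) : Fin (κ t) ≃ {p : Σ t, Fin (κ t) // p.1 = t} :=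
    (Equiv.sigmaSubtype (β := fun t => Fin (κ t)) t).symm
  have hpattern (f : Fin k → Σ t, Fin (κ t)) (hf : Bijective f) (t : Fin r) :
      fiberCard (fun s => (f s).1) t = κ t := by
    have := (bijective_iff_forall_bijective_splitEquiv _ Sigma.fst e ⟨f, fun _ => rfl⟩).mp hf t
    simpa using Fintype.card_of_bijective this
  have hfiber (c : Fin k → Fin r) (hc : fiberCard c = κ) :
      #{f : Fin k → Σ t, Fin (κ t) | (∀ s, (f s).1 = c s) ∧ Bijective f} = ∏ t, (κ t)! := by
    rw [card_eq_sum_ones, sum_filter_eq_prod_sum c Sigma.fst e Bijective (fun _ ρ => Bijective ρ)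
      (fun _ => 1) (fun _ _ => 1) (bijective_iff_forall_bijective_splitEquiv c Sigma.fst e)
      (by simp)]
    refine prod_congr rfl fun t _ => ?_
    rw [← card_eq_sum_ones, card_filter_bijective (by simp [hc]), Fintype.card_fin, hc]
  calc #{c : Fin k → Fin r | fiberCard c = κ} * ∏ t, (κ t)!
      = ∑ c : Fin k → Fin r with fiberCard c = κ,
          #{f : Fin k → Σ t, Fin (κ t) | (∀ s, (f s).1 = c s) ∧ Bijective f} := by
        rw [sum_congr rfl fun c hc => hfiber c (mem_filter.mp hc).2, sum_const, smul_eq_mul]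
    _ = #{f : Fin k → Σ t, Fin (κ t) | Bijective f} := by
        rw [card_eq_sum_card_fiberwise (f := fun f s => (f s).1) fun f hf => ?_]
        · refine sum_congr rfl fun c _ => ?_
          rw [filter_filter]
          exact congrArg card (filter_congr fun f _ => by rw [funext_iff, and_comm])
        · simpa [funext_iff] using hpattern f (mem_filter.mp hf).2
    _ = k ! := by rw [card_filter_bijective (by simp [h]), Fintype.card_fin]

theorem card_fiberCard_eq_div {k r : ℕ} (κ : Fin r → ℕ) (h : ∑ t, κ t = k) :
    (#{c : Fin k → Fin r | fiberCard c = κ} : ℚ) = k ! / ∏ t, ((κ t)! : ℚ) := by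
  rw [eq_div_iff (by positivity)]
  exact_mod_cast card_fiberCard_eq_mul_prod_factorial κ h

section Components

variable {m r : ℕ} {comp : Fin m → Fin r} {V : Fin r → Finset (Fin m)}
  (hV : ∀ i t, i ∈ V t ↔ comp i = t)

def componentEquiv (t : Fin r) : Fin (V t).card ≃ {i // comp i = t} :=
  (orderIsoOfFin (V t) rfl).toEquiv.trans (Equiv.subtypeEquivRight fun i => hV i t)

theorem coe_componentEquiv (t : Fin r) (b : Fin (V t).card) :
    (componentEquiv hV t b : Fin m) = (V t).orderEmbOfFin rfl b := by
  simp [componentEquiv]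

variable {k : ℕ} (c : Fin k → Fin r)

theorem apply_fiberEmb_eq_orderEmbOfFin (τ : {τ : Fin k → Fin m // ∀ s, comp (τ s) = c s})
    (t : Fin r) (a : Fin (fiberCard c t)) :
    τ.1 (fiberEmb c t a) =
      (V t).orderEmbOfFin rfl (splitEquiv c comp (componentEquiv hV) τ t a) := by
  rw [← coe_componentEquiv hV, coe_splitEquiv_apply]

/-- Inversions between different components are never edges, so only those inside a
component count. -/
theorem sgnG_eq_prod_sgnG_splitEquiv (A : Fin m → Fin m → Bool)
    (hA : ∀ i j, A i j = true → comp i = comp j)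
    (τ : {τ : Fin k → Fin m // ∀ s, comp (τ s) = c s}) :
    sgnG A τ.1 = ∏ t, sgnG (fun a b => A ((V t).orderEmbOfFin rfl a) ((V t).orderEmbOfFin rfl b))
      (splitEquiv c comp (componentEquiv hV) τ t) := by
  rw [sgnG, card_filter_lt_eq_sum_fiberCard c
    (fun s s' => τ.1 s' < τ.1 s ∧ A (τ.1 s) (τ.1 s') = true)
    fun s s' h => (τ.2 s).symm.trans ((hA _ _ h.2).trans (τ.2 s')), ← prod_pow_eq_pow_sum]
  refine prod_congr rfl fun t _ => ?_
  simp only [sgnG, apply_fiberEmb_eq_orderEmbOfFin hV, OrderEmbedding.lt_iff_lt]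

theorem sum_sgnG_eq_prod_betaG (hV : ∀ i t, i ∈ V t ↔ comp i = t) (A : Fin m → Fin m → Bool)
    (hA : ∀ i j, A i j = true → comp i = comp j) (y : Fin m → Bool) :
    ∑ τ : Fin k → Fin m with
        (∀ s, comp (τ s) = c s) ∧ ∀ i, #{s | τ s = i} % 2 = if y i then 1 else 0, sgnG A τ =
      ∏ t, betaG (V t).card
        (fun a b => A ((V t).orderEmbOfFin rfl a) ((V t).orderEmbOfFin rfl b))
        (fiberCard c t) (fun a => y ((V t).orderEmbOfFin rfl a)) := by
  rw [sum_filter_eq_prod_sum c comp (componentEquiv hV) _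
    (fun t σ => ∀ b, #{a | σ a = b} % 2 = if y ((V t).orderEmbOfFin rfl b) then 1 else 0)
    _ _ (fun τ => ?parity) (sgnG_eq_prod_sgnG_splitEquiv hV c A hA)]
  · exact prod_congr rfl fun t _ => (betaG_eq_sum_sgnG _ _ _ _).symm
  · simpa only [coe_componentEquiv] using forall_card_filter_iff c comp (componentEquiv hV)
      (fun i n => n % 2 = if y i then 1 else 0) τ

theorem betaG_eq_sum_card_mul_prod (hV : ∀ i t, i ∈ V t ↔ comp i = t) (A : Fin m → Fin m → Bool)
    (hA : ∀ i j, A i j = true → comp i = comp j) (k : ℕ) (y : Fin m → Bool) :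
    betaG m A k y = ∑ κ ∈ Nat.antidiagonalTuple r k,
      (#{c : Fin k → Fin r | fiberCard c = κ} : ℤ) *
        ∏ t, betaG (V t).card
          (fun a b => A ((V t).orderEmbOfFin rfl a) ((V t).orderEmbOfFin rfl b))
          (κ t) (fun a => y ((V t).orderEmbOfFin rfl a)) := by
  rw [betaG_eq_sum_sgnG, ← sum_fiberwise _ (fun τ s => comp (τ s))]
  have hpattern (c : Fin k → Fin r) :
      filter (fun τ => (fun s => comp (τ s)) = c)
        {τ : Fin k → Fin m | ∀ i, #{s | τ s = i} % 2 = if y i then 1 else 0} =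
      filter (fun τ : Fin k → Fin m => (∀ s, comp (τ s) = c s) ∧
        ∀ i, #{s | τ s = i} % 2 = if y i then 1 else 0) univ := by
    ext τ
    simp only [mem_filter, mem_univ, true_and, funext_iff, and_comm]
  simp only [hpattern, sum_sgnG_eq_prod_betaG _ hV A hA]
  rw [← sum_fiberwise_of_maps_to (g := fiberCard) (t := Nat.antidiagonalTuple r k)
    fun c _ => Nat.mem_antidiagonalTuple.mpr (sum_fiberCard c)]
  refine sum_congr rfl fun κ _ => ?_
  rw [sum_congr rfl fun c hc => by rw [(mem_filter.mp hc).2], sum_const, nsmul_eq_mul]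

end Components

end GraphSign

open GraphSign in
theorem stmt9_general (m : ℕ) (A : Fin m → Fin m → Bool)
    (r : ℕ) (V : Fin r → Finset (Fin m))
    (hpart : ∀ i : Fin m, ∃! t, i ∈ V t)
    (hcomp : ∀ i j : Fin m,
      (SimpleGraph.fromRel (fun a b => A a b = true)).Reachable i j ↔
        ∃ t, i ∈ V t ∧ j ∈ V t)
    (k : ℕ) (y : Fin m → Bool) :
    (betaG m A k y : ℚ) = ∑ κ ∈ Finset.Nat.antidiagonalTuple r k,
      ((k.factorial : ℚ) / ∏ t, ((κ t).factorial : ℚ)) *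
        ∏ t, (betaG (V t).card
          (fun a b => A ((V t).orderEmbOfFin rfl a) ((V t).orderEmbOfFin rfl b))
          (κ t) (fun a => y ((V t).orderEmbOfFin rfl a)) : ℚ) := by
  choose comp hcomp_mem using fun i => (hpart i).exists
  have hV (i : Fin m) (t : Fin r) : i ∈ V t ↔ comp i = t :=
    ⟨fun hi => ((hpart i).unique hi (hcomp_mem i)).symm, fun h => h ▸ hcomp_mem i⟩
  have hA (i j : Fin m) (hij : A i j = true) : comp i = comp j := by
    obtain rfl | hne := eq_or_ne i j
    · rfl
    have hadj : (SimpleGraph.fromRel fun a b => A a b = true).Adj i j :=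
      SimpleGraph.fromRel_adj _ i j |>.mpr ⟨hne, Or.inl hij⟩
    obtain ⟨t, hi, hj⟩ := (hcomp i j).mp hadj.reachable
    rw [(hV i t).mp hi, (hV j t).mp hj]
  rw [betaG_eq_sum_card_mul_prod hV A hA]
  push_cast
  refine Finset.sum_congr rfl fun κ hκ => ?_
  rw [card_fiberCard_eq_div κ (Finset.Nat.mem_antidiagonalTuple.mp hκ)]

theorem stmt9 (m : ℕ) (hm : 1 ≤ m) (A : Fin m → Fin m → Bool)
    (hsymm : ∀ i j, A i j = A j i) (hdiag : ∀ i, A i i = false)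
    (r : ℕ) (V : Fin r → Finset (Fin m))
    (hne : ∀ t, (V t).Nonempty)
    (hpart : ∀ i : Fin m, ∃! t, i ∈ V t)
    (hcomp : ∀ i j : Fin m,
      (SimpleGraph.fromRel (fun a b => A a b = true)).Reachable i j ↔
        ∃ t, i ∈ V t ∧ j ∈ V t)
    (k : ℕ) (y : Fin m → Bool) :
    (betaG m A k y : ℚ) = ∑ κ ∈ Finset.Nat.antidiagonalTuple r k,
      ((k.factorial : ℚ) / ∏ t, ((κ t).factorial : ℚ)) *
        ∏ t, (betaG (V t).card
          (fun a b => A ((V t).orderEmbOfFin rfl a) ((V t).orderEmbOfFin rfl b))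
          (κ t) (fun a => y ((V t).orderEmbOfFin rfl a)) : ℚ) :=
  stmt9_general m A r V hpart hcomp k y
end

section
/- Let H be an r×n matrix over F₂ = ZMod 2, let n ≥ 1, and let δ > 0 and γ' > 0 be real numbers. Suppose that for every nonempty S ⊆ {1,…,n} with |S| ≤ δ·n, the number of rows j ∈ {1,…,r} for which exactly one i ∈ S satisfies H_{ji} = 1 is at least γ'·|S|. Then every nonzero x ∈ F₂^n with H·x = 0 has Hamming weight strictly greater than δ·n. -/
/-!
If `x ≠ 0` had weight at most `δ n`, its support `S` would be a nonempty set within the expansion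
range, so it would have a unique neighbour `j`. Over `𝔽₂` the `j`-th parity check of `x` counts,
mod 2, the columns of `S` that meet row `j`; there is exactly one, so `(H x)_j = 1 ≠ 0`.
-/

open Finset

namespace ZMod

theorem sum_eq_card_filter_eq_one {ι : Type*} (s : Finset ι) (f : ι → ZMod 2) :
    ∑ i ∈ s, f i = ((s.filter (f · = 1)).card : ZMod 2) := by
  rw [← sum_boole]
  refine sum_congr rfl fun i _ => ?_
  generalize f i = a
  fin_cases a <;> rfl

end ZMod

namespace Matrix

variable {m ι : Type*} [Fintype ι]

theorem mulVec_apply_eq_sum_support (H : Matrix m ι (ZMod 2)) (x : ι → ZMod 2)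
    (j : m) : H.mulVec x j = ∑ i ∈ univ.filter (x · ≠ 0), H j i := by
  rw [mulVec, dotProduct, sum_filter]
  refine sum_congr rfl fun i _ => ?_
  generalize x i = a
  fin_cases a
  · exact mul_zero _
  · exact mul_one _

theorem mulVec_apply_eq_one_of_unique_neighbor (H : Matrix m ι (ZMod 2))
    (x : ι → ZMod 2) (j : m)
    (hj : ((univ.filter (x · ≠ 0)).filter (fun i => H j i = 1)).card = 1) :
    H.mulVec x j = 1 := by
  rw [mulVec_apply_eq_sum_support, ZMod.sum_eq_card_filter_eq_one, hj, Nat.cast_one]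

end Matrix

theorem stmt12_general (r n : ℕ) (H : Matrix (Fin r) (Fin n) (ZMod 2))
    (δ γ' : ℝ) (hγ : 0 < γ')
    (hexp : ∀ S : Finset (Fin n), S.Nonempty → (S.card : ℝ) ≤ δ * n →
      γ' * S.card ≤ ((Finset.univ.filter (fun j : Fin r =>
        (S.filter (fun i => H j i = 1)).card = 1)).card : ℝ))
    (x : Fin n → ZMod 2) (hx : x ≠ 0) (hHx : H.mulVec x = 0) :
    δ * n < ((Finset.univ.filter (fun i => x i ≠ 0)).card : ℝ) := by
  by_contra! hsmall
  have hsupp : (univ.filter (x · ≠ 0)).Nonempty := by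
    obtain ⟨i, hi⟩ := Function.ne_iff.mp hx
    exact ⟨i, mem_filter.mpr ⟨mem_univ i, hi⟩⟩
  have hneighbors : 0 < γ' * (univ.filter (x · ≠ 0)).card := by
    have := hsupp.card_pos
    positivity
  obtain ⟨j, hj⟩ := card_pos.mp (by exact_mod_cast hneighbors.trans_le (hexp _ hsupp hsmall))
  have h1 := H.mulVec_apply_eq_one_of_unique_neighbor x j (mem_filter.mp hj).2
  rw [hHx] at h1
  exact zero_ne_one h1

theorem stmt12 (r n : ℕ) (hn : 1 ≤ n) (H : Matrix (Fin r) (Fin n) (ZMod 2))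
    (δ γ' : ℝ) (hδ : 0 < δ) (hγ : 0 < γ')
    (hexp : ∀ S : Finset (Fin n), S.Nonempty → (S.card : ℝ) ≤ δ * n →
      γ' * S.card ≤ ((Finset.univ.filter (fun j : Fin r =>
        (S.filter (fun i => H j i = 1)).card = 1)).card : ℝ))
    (x : Fin n → ZMod 2) (hx : x ≠ 0) (hHx : H.mulVec x = 0) :
    δ * n < ((Finset.univ.filter (fun i => x i ≠ 0)).card : ℝ) :=
  stmt12_general r n H δ γ' hγ hexp x hx hHx
end

section
/- Let G be a bipartite graph with finite left vertex set L and right vertex set R, in which every left vertex has degree at most a. For S ⊆ L let Γ(S) ⊆ R be the set of right vertices adjacent to at least one vertex of S, and Γ₁(S) ⊆ R the set of right vertices adjacent to exactly one vertex of S. Then for every real γ and every S ⊆ L, if |Γ(S)| ≥ γ·|S| then |Γ₁(S)| ≥ (2γ − a)·|S|. In particular, if G is a (δ, γ) vertex expander then G is a (δ, 2γ − a) unique-neighbor expander. -/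
/-!
Count the edges between `S` and `Γ(S)`. Every vertex of `Γ(S)` receives at least one edge and
every vertex of `Γ(S) \ Γ₁(S)` at least two, so `2 |Γ(S)| - |Γ₁(S)| ≤ e(S) ≤ a |S|`.
-/

open Finset

section UniqueNeighbor

variable {L R : Type*} [Fintype R] (E : L → R → Prop) [∀ v r, Decidable (E v r)]

def neighborFinset (S : Finset L) : Finset R := {r | ∃ s ∈ S, E s r}

def uniqueNeighborFinset (S : Finset L) : Finset R := {r | #(S.bipartiteBelow E r) = 1}

lemma two_mul_indicator_pos_le (c : ℕ) :
    2 * (if 0 < c then 1 else 0) ≤ (if c = 1 then 1 else 0) + c := by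
  split_ifs <;> omega

lemma two_mul_card_neighborFinset_le (S : Finset L) :
    2 * #(neighborFinset E S) ≤
      #(uniqueNeighborFinset E S) + ∑ s ∈ S, #(univ.bipartiteAbove E s) := by
  have mem_neighbor_iff (r : R) : (∃ s ∈ S, E s r) ↔ 0 < #(S.bipartiteBelow E r) := by
    rw [card_pos, bipartiteBelow, filter_nonempty_iff]
  simp only [neighborFinset, uniqueNeighborFinset, card_filter, mem_neighbor_iff,
    sum_card_bipartiteAbove_eq_sum_card_bipartiteBelow, mul_sum, ← sum_add_distrib]
  exact sum_le_sum fun r _ => two_mul_indicator_pos_le _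

theorem le_card_uniqueNeighborFinset {a : ℝ}
    (hdeg : ∀ v : L, (#(univ.bipartiteAbove E v) : ℝ) ≤ a) {γ : ℝ} {S : Finset L}
    (hexp : γ * #S ≤ #(neighborFinset E S)) :
    (2 * γ - a) * #S ≤ #(uniqueNeighborFinset E S) := by
  have hedges : ((∑ s ∈ S, #(univ.bipartiteAbove E s) : ℕ) : ℝ) ≤ #S * a := by
    push_cast
    simpa using sum_le_card_nsmul S _ a fun s _ => hdeg s
  have hcount : 2 * (#(neighborFinset E S) : ℝ) ≤
      #(uniqueNeighborFinset E S) + ∑ s ∈ S, #(univ.bipartiteAbove E s) := by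
    exact_mod_cast two_mul_card_neighborFinset_le E S
  linarith

end UniqueNeighbor

theorem stmt13 {L R : Type*} [Fintype L] [Fintype R] (E : L → R → Prop)
    [∀ v rr, Decidable (E v rr)] (a : ℝ)
    (hdeg : ∀ v : L, ((Finset.univ.filter (fun rr : R => E v rr)).card : ℝ) ≤ a) :
    (∀ (γ : ℝ) (S : Finset L),
      γ * S.card ≤
          ((Finset.univ.filter (fun rr : R => ∃ s ∈ S, E s rr)).card : ℝ) →
      (2 * γ - a) * S.card ≤
          ((Finset.univ.filter
            (fun rr : R => (S.filter (fun s => E s rr)).card = 1)).card : ℝ)) ∧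
    ∀ (δ γ : ℝ),
      (∀ S : Finset L, (S.card : ℝ) ≤ δ * Fintype.card L →
        γ * S.card ≤
          ((Finset.univ.filter (fun rr : R => ∃ s ∈ S, E s rr)).card : ℝ)) →
      ∀ S : Finset L, (S.card : ℝ) ≤ δ * Fintype.card L →
        (2 * γ - a) * S.card ≤
          ((Finset.univ.filter
            (fun rr : R => (S.filter (fun s => E s rr)).card = 1)).card : ℝ) := by
  exact ⟨fun _ _ => le_card_uniqueNeighborFinset E hdeg,
    fun _ _ hexp S hS => le_card_uniqueNeighborFinset E hdeg (hexp S hS)⟩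
end

section
/- Let n, m ≥ 1 and work over F₂ = ZMod 2. Define the symplectic form on F₂^{2n} by ω(u, v) := ∑_{i=1}^{n} (u_i·v_{n+i} + u_{n+i}·v_i). Let b_1, …, b_m ∈ F₂^{2n} and let T : F₂^{2n} → F₂^{2n} be a linear map that is injective on the span of {b_1, …, b_m} and satisfies ω(T b_i, T b_j) = ω(b_i, b_j) for all i, j ∈ {1,…,m}. Then there exists a linear map T' : F₂^{2n} → F₂^{2n} with ω(T' x, T' y) = ω(x, y) for all x, y ∈ F₂^{2n} (i.e. T' is symplectic, hence invertible) such that T' b_i = T b_i for all i ∈ {1,…,m}. -/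
/-!
An injective isometry `f : W → V` of a nondegenerate alternating form `B` extends to `W + K v`,
for `v ∉ W`, by sending `v` to some `v' ∉ f W` with `B (f w) v' = B w v` for all `w ∈ W`;
alternation makes the extension isometric. Nondegeneracy gives a solution `u` of these
equations, unique up to `(f W)ᗮ`. If `u = f w₀` lies in `f W`, then `v - w₀ ∈ Wᗮ \ W`; since
`f` maps the radical `W ⊓ Wᗮ` onto that of `f W`, and `Wᗮ`, `(f W)ᗮ` have the same dimension,
also `(f W)ᗮ ⊄ f W`, so `u` can be moved out of `f W`. Iterating until `W = V` (Witt's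
extension theorem) and applying it to `T` on the span of the `b i` gives the theorem.
-/

/-- The standard symplectic form on `F₂^{2n} = F₂^n × F₂^n`:
`ω(u, v) = ∑ i, (u_i v_{n+i} + u_{n+i} v_i)`. -/
def symp (n : ℕ) (u v : (Fin n → ZMod 2) × (Fin n → ZMod 2)) : ZMod 2 :=
  ∑ i, (u.1 i * v.2 i + u.2 i * v.1 i)

open Module Submodule LinearMap Function

namespace Submodule

variable {K M N : Type*} [DivisionRing K] [AddCommGroup M] [Module K M] [AddCommGroup N]
  [Module K N]

lemma finrank_inf_eq_iff_le [FiniteDimensional K N] {p q : Submodule K N} :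
    finrank K ↥(p ⊓ q) = finrank K q ↔ q ≤ p :=
  ⟨fun h => inf_eq_right.1 (eq_of_le_of_finrank_eq inf_le_right h),
    fun h => by rw [inf_eq_right.2 h]⟩

lemma finrank_range_inf_eq_finrank_comap {f : M →ₗ[K] N} (hf : Injective f)
    (q : Submodule K N) : finrank K ↥(range f ⊓ q) = finrank K (q.comap f) := by
  rw [← map_comap_eq]
  exact (equivMapOfInjective f hf _).finrank_eq.symm

end Submodule

namespace LinearMap.BilinForm

lemma apply_apply_eq_of_mem_span {R M : Type*} [CommSemiring R]
    [AddCommMonoid M] [Module R M] {B B' : LinearMap.BilinForm R M} {s : Set M}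
    (h : ∀ x ∈ s, ∀ y ∈ s, B x y = B' x y) {x y : M} (hx : x ∈ span R s) (hy : y ∈ span R s) :
    B x y = B' x y :=
  eqOn_span' (f := B.flip y) (g := B'.flip y) (fun x' hx' => eqOn_span' (h x' hx') hy) hx

variable {K V : Type*} [Field K] [AddCommGroup V] [Module K V] {B : LinearMap.BilinForm K V}

section

variable {W : Submodule K V} {f : W →ₗ[K] V}

lemma comap_orthogonal_range (hfB : ∀ x y : W, B (f x) (f y) = B x y) :
    (B.orthogonal (range f)).comap f = (B.orthogonal W).comap W.subtype := by
  ext x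
  simp only [mem_comap, mem_orthogonal_iff, LinearMap.mem_range, forall_exists_index,
    subtype_apply]
  constructor
  · intro h y hy
    simpa [hfB] using h _ ⟨y, hy⟩ rfl
  · rintro h _ y rfl
    rw [hfB]
    exact h y y.2

lemma finrank_range_inf_orthogonal (hf : Injective f)
    (hfB : ∀ x y : W, B (f x) (f y) = B x y) :
    finrank K ↥(range f ⊓ B.orthogonal (range f)) = finrank K ↥(W ⊓ B.orthogonal W) := by
  rw [finrank_range_inf_eq_finrank_comap hf, comap_orthogonal_range hfB,
    ← finrank_range_inf_eq_finrank_comap W.injective_subtype, range_subtype]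

variable [FiniteDimensional K V]

lemma orthogonal_range_le_range_iff (hB : B.Nondegenerate) (hf : Injective f)
    (hfB : ∀ x y : W, B (f x) (f y) = B x y) :
    B.orthogonal (range f) ≤ range f ↔ B.orthogonal W ≤ W := by
  rw [← finrank_inf_eq_iff_le, ← finrank_inf_eq_iff_le, finrank_range_inf_orthogonal hf hfB,
    finrank_orthogonal hB, finrank_orthogonal hB, finrank_range_of_inj hf]

lemma exists_forall_apply_eq_apply (hB : B.Nondegenerate) (hf : Injective f) (v : V) :
    ∃ u, ∀ w : W, B (f w) u = B w v := by
  obtain ⟨g, hg⟩ := f.exists_leftInverse_of_injective (ker_eq_bot.2 hf)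
  refine ⟨(B.flip.toDual hB.flip).symm (B.flip v ∘ₗ W.subtype ∘ₗ g), fun w => ?_⟩
  rw [← flip_apply B, apply_toDual_symm_apply]
  change B (g (f w)) v = _
  rw [← LinearMap.comp_apply g f, hg, id_apply]

lemma exists_notMem_range_forall_apply_eq (hB : B.Nondegenerate) (hf : Injective f)
    (hfB : ∀ x y : W, B (f x) (f y) = B x y) {v : V} (hv : v ∉ W) :
    ∃ v' ∉ range f, ∀ w : W, B (f w) v' = B w v := by
  obtain ⟨u, hu⟩ := exists_forall_apply_eq_apply hB hf v
  by_cases hur : u ∉ range f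
  · exact ⟨u, hur, hu⟩
  obtain ⟨w₀, rfl⟩ := not_not.1 hur
  have hperp : v - w₀ ∈ B.orthogonal W := mem_orthogonal_iff.2 fun y hy => by
    rw [map_sub, ← hu ⟨y, hy⟩, hfB]
    exact sub_self _
  have hnot : v - w₀ ∉ W := fun h => hv (by simpa using add_mem h w₀.2)
  obtain ⟨z, hz, hzf⟩ := SetLike.not_le_iff_exists.1
    ((orthogonal_range_le_range_iff hB hf hfB).not.2 fun h => hnot (h hperp))
  refine ⟨f w₀ + z, fun h => hzf (by simpa using sub_mem h (mem_range_self f w₀)), fun w => ?_⟩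
  rw [map_add, hu, mem_orthogonal_iff.1 hz _ (mem_range_self f w), add_zero]

lemma exists_extend_sup_span (hB : B.IsAlt) (hnd : B.Nondegenerate) (hf : Injective f)
    (hfB : ∀ x y : W, B (f x) (f y) = B x y) {v : V} (hv : v ∉ W) :
    ∃ g : V →ₗ[K] V, g ∘ₗ W.subtype = f ∧ Injective (g.domRestrict (W ⊔ K ∙ v)) ∧
      ∀ x y : ↥(W ⊔ K ∙ v), B (g x) (g y) = B x y := by
  obtain ⟨v', hv'f, hv'⟩ := exists_notMem_range_forall_apply_eq hnd hf hfB hv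
  obtain ⟨g, hgf, hgv⟩ := f.exists_extend_of_notMem hv v'
  have hg : ∀ (w : W) (c : K), g (w + c • v) = f w + c • v' := fun w c => by
    rw [map_add, map_smul, hgv, ← hgf]
    rfl
  have hmem : ∀ x ∈ W ⊔ K ∙ v, ∃ (w : W) (c : K), (w : V) + c • v = x := fun x hx => by
    obtain ⟨w, hw, _, hz, rfl⟩ := mem_sup.1 hx
    obtain ⟨c, rfl⟩ := mem_span_singleton.1 hz
    exact ⟨⟨w, hw⟩, c, rfl⟩
  refine ⟨g, hgf, ?_, ?_⟩
  · rw [injective_domRestrict_iff, disjoint_ker]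
    intro x hx hx0
    obtain ⟨w, c, rfl⟩ := hmem x hx
    rw [hg] at hx0
    by_cases hc : c = 0
    · subst hc
      rw [zero_smul, add_zero] at hx0 ⊢
      simpa using (injective_iff_map_eq_zero f).1 hf w hx0
    · refine absurd ⟨-c⁻¹ • w, ?_⟩ hv'f
      rw [map_smul, eq_neg_of_add_eq_zero_left hx0, smul_neg, neg_smul, neg_neg, smul_smul,
        inv_mul_cancel₀ hc, one_smul]
  · rintro ⟨x, hx⟩ ⟨y, hy⟩
    obtain ⟨w₁, c₁, rfl⟩ := hmem x hx
    obtain ⟨w₂, c₂, rfl⟩ := hmem y hy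
    have hv'w : B v' (f w₂) = B v w₂ := by rw [← hB.neg_eq, hv', hB.neg_eq]
    simp only [hg, map_add, map_smul, LinearMap.add_apply, LinearMap.smul_apply, hfB, hv', hv'w,
      hB.self_eq_zero]

end

theorem exists_isometry_extend [FiniteDimensional K V] (hB : B.IsAlt) (hnd : B.Nondegenerate)
    {W : Submodule K V} (f : W →ₗ[K] V) (hf : Injective f)
    (hfB : ∀ x y : W, B (f x) (f y) = B x y) :
    ∃ g : V →ₗ[K] V, (∀ x y, B (g x) (g y) = B x y) ∧ g ∘ₗ W.subtype = f := by
  by_cases hW : W = ⊤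
  · obtain ⟨g, hg⟩ := f.exists_extend
    have hgf (x : V) : g x = f ⟨x, hW ▸ mem_top⟩ := LinearMap.congr_fun hg ⟨x, _⟩
    exact ⟨g, fun x y => by rw [hgf, hgf, hfB], hg⟩
  obtain ⟨v, -, hv⟩ := SetLike.exists_of_lt (lt_top_iff_ne_top.2 hW)
  obtain ⟨g, hgf, hg, hgB⟩ := exists_extend_sup_span hB hnd hf hfB hv
  obtain ⟨h, hhB, hhg⟩ := exists_isometry_extend hB hnd (g.domRestrict (W ⊔ K ∙ v)) hg hgB
  refine ⟨h, hhB, ?_⟩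
  rw [← hgf]
  ext w
  exact LinearMap.congr_fun hhg ⟨w, mem_sup_left w.2⟩
termination_by finrank K V - finrank K W
decreasing_by
  have := finrank_lt_finrank_of_lt (lt_sup_iff_notMem.2 hv)
  have := (W ⊔ K ∙ v).finrank_le
  omega

end LinearMap.BilinForm

open LinearMap.BilinForm

section Symplectic

variable {n : ℕ}

lemma symp_eq_dotProduct (u v : (Fin n → ZMod 2) × (Fin n → ZMod 2)) :
    symp n u v = u.1 ⬝ᵥ v.2 + u.2 ⬝ᵥ v.1 :=
  Finset.sum_add_distrib

variable (n) in
def sympForm : LinearMap.BilinForm (ZMod 2) ((Fin n → ZMod 2) × (Fin n → ZMod 2)) :=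
  LinearMap.mk₂ (ZMod 2) (symp n)
    (fun u u' v => by
      simp only [symp_eq_dotProduct, Prod.fst_add, Prod.snd_add, add_dotProduct]
      abel)
    (fun c u v => by
      simp only [symp_eq_dotProduct, Prod.smul_fst, Prod.smul_snd, smul_dotProduct, smul_eq_mul,
        mul_add])
    (fun u v v' => by
      simp only [symp_eq_dotProduct, Prod.fst_add, Prod.snd_add, dotProduct_add]
      abel)
    (fun c u v => by
      simp only [symp_eq_dotProduct, Prod.smul_fst, Prod.smul_snd, dotProduct_smul, smul_eq_mul,
        mul_add])

lemma sympForm_apply (u v : (Fin n → ZMod 2) × (Fin n → ZMod 2)) :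
    sympForm n u v = symp n u v :=
  rfl

lemma sympForm_isAlt : (sympForm n).IsAlt := fun u => by
  rw [sympForm_apply, symp_eq_dotProduct, dotProduct_comm u.2, CharTwo.add_self_eq_zero]

lemma sympForm_nondegenerate : (sympForm n).Nondegenerate := by
  refine sympForm_isAlt.isRefl.nondegenerate_iff_separatingLeft.2 fun u hu => ?_
  ext i
  · simpa [sympForm_apply, symp_eq_dotProduct] using hu (0, Pi.single i 1)
  · simpa [sympForm_apply, symp_eq_dotProduct] using hu (Pi.single i 1, 0)

end Symplectic

theorem stmt14_general (n m : ℕ)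
    (b : Fin m → (Fin n → ZMod 2) × (Fin n → ZMod 2))
    (T : ((Fin n → ZMod 2) × (Fin n → ZMod 2)) →ₗ[ZMod 2]
          ((Fin n → ZMod 2) × (Fin n → ZMod 2)))
    (hinj : Set.InjOn T (Submodule.span (ZMod 2) (Set.range b) : Set _))
    (hpres : ∀ i j, symp n (T (b i)) (T (b j)) = symp n (b i) (b j)) :
    ∃ T' : ((Fin n → ZMod 2) × (Fin n → ZMod 2)) →ₗ[ZMod 2]
            ((Fin n → ZMod 2) × (Fin n → ZMod 2)),
      (∀ x y, symp n (T' x) (T' y) = symp n x y) ∧ ∀ i, T' (b i) = T (b i) := by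
  set W := span (ZMod 2) (Set.range b)
  have hT : Injective (T.domRestrict W) :=
    injective_domRestrict_iff.2 (disjoint_ker_iff_injOn.2 hinj)
  have hTB (x y : W) : sympForm n (T x) (T y) = sympForm n x y :=
    apply_apply_eq_of_mem_span (B := (sympForm n).compl₁₂ T T)
      (by rintro _ ⟨i, rfl⟩ _ ⟨j, rfl⟩; exact hpres i j) x.2 y.2
  obtain ⟨g, hg, hgT⟩ :=
    exists_isometry_extend sympForm_isAlt sympForm_nondegenerate (T.domRestrict W) hT hTB
  exact ⟨g, hg, fun i => LinearMap.congr_fun hgT ⟨b i, subset_span (Set.mem_range_self i)⟩⟩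

theorem stmt14 (n m : ℕ) (hn : 1 ≤ n) (hm : 1 ≤ m)
    (b : Fin m → (Fin n → ZMod 2) × (Fin n → ZMod 2))
    (T : ((Fin n → ZMod 2) × (Fin n → ZMod 2)) →ₗ[ZMod 2]
          ((Fin n → ZMod 2) × (Fin n → ZMod 2)))
    (hinj : Set.InjOn T (Submodule.span (ZMod 2) (Set.range b) : Set _))
    (hpres : ∀ i j, symp n (T (b i)) (T (b j)) = symp n (b i) (b j)) :
    ∃ T' : ((Fin n → ZMod 2) × (Fin n → ZMod 2)) →ₗ[ZMod 2]
            ((Fin n → ZMod 2) × (Fin n → ZMod 2)),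
      (∀ x y, symp n (T' x) (T' y) = symp n x y) ∧ ∀ i, T' (b i) = T (b i) :=
  stmt14_general n m b T hinj hpres
end

section
/- Let R be a commutative ring, n ≥ 1, and z_1, …, z_n ∈ R with z_i² = 1 for all i. For 0 ≤ a ≤ n let e_a := ∑_{S ⊆ {1,…,n}, |S| = a} ∏_{i ∈ S} z_i, with the conventions e_{−1} = 0 and e_{n+1} = 0, and let T := z_1 + … + z_n. Then for every 0 ≤ a ≤ n, T·e_a = (a+1)·e_{a+1} + (n−a+1)·e_{a−1}, where the natural-number coefficients act on R by repeated addition. -/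
/-- The elementary symmetric sums `e_a` of `z₁, …, z_n`, indexed by `a : ℤ`, with the
convention `e_a = 0` for `a < 0` or `a > n`. -/
def esymZ (n : ℕ) {R : Type*} [CommRing R] (z : Fin n → R) (a : ℤ) : R :=
  if 0 ≤ a ∧ a ≤ (n : ℤ) then
    ∑ S ∈ Finset.powersetCard a.toNat (Finset.univ : Finset (Fin n)), ∏ i ∈ S, z i
  else 0

/-!
Expand `T · e_a = ∑_{|S| = a} ∑_i z_i ∏_{j ∈ S} z_j` and split the inner sum according to
whether `i ∈ S`. For `i ∉ S` the summand is `∏_{S ∪ {i}} z`, and each `(a+1)`-set arises from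
`a + 1` pairs `(S, i)`. For `i ∈ S` the summand is `∏_{S \ {i}} z` because `z_i² = 1`, and each
`(a-1)`-set arises from `n - a + 1` pairs. Both counts are instances of one double counting of
pairs `(S, i)` with `i ∉ S` against pairs `(T, i)` with `i ∈ T`, via `T = insert i S`.
-/

open Finset

theorem Finset.sum_powersetCard_sum_compl_eq_sum_sum_erase {ι M : Type*} [Fintype ι]
    [DecidableEq ι] [AddCommMonoid M] (a : ℕ) (f : Finset ι → ι → M) :
    ∑ S ∈ powersetCard a univ, ∑ i ∈ Sᶜ, f S i
      = ∑ T ∈ powersetCard (a + 1) univ, ∑ i ∈ T, f (T.erase i) i := by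
  rw [sum_sigma', sum_sigma']
  refine sum_nbij' (fun p => ⟨insert p.2 p.1, p.2⟩) (fun p => ⟨p.1.erase p.2, p.2⟩)
    ?_ ?_ ?_ ?_ ?_
  · rintro ⟨S, i⟩ hp
    simp only [mem_sigma, mem_powersetCard_univ, mem_compl] at hp ⊢
    exact ⟨by rw [card_insert_of_notMem hp.2, hp.1], mem_insert_self _ _⟩
  · rintro ⟨T, i⟩ hp
    simp only [mem_sigma, mem_powersetCard_univ, mem_compl] at hp ⊢
    exact ⟨by rw [card_erase_of_mem hp.2, hp.1, Nat.add_sub_cancel], notMem_erase _ _⟩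
  · rintro ⟨S, i⟩ hp
    simp only [mem_sigma, mem_powersetCard_univ, mem_compl] at hp
    simp [erase_insert hp.2]
  · rintro ⟨T, i⟩ hp
    simp only [mem_sigma, mem_powersetCard_univ] at hp
    simp [insert_erase hp.2]
  · rintro ⟨S, i⟩ hp
    simp only [mem_sigma, mem_powersetCard_univ, mem_compl] at hp
    simp [erase_insert hp.2]

section esymZ

variable {n : ℕ} {R : Type*} [CommRing R] (z : Fin n → R)

theorem esymZ_natCast (k : ℕ) :
    esymZ n z k = ∑ S ∈ powersetCard k univ, ∏ i ∈ S, z i := by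
  unfold esymZ
  by_cases hk : k ≤ n
  · simp [hk]
  · rw [if_neg (by simpa using hk), powersetCard_eq_empty.mpr (by simpa using hk), sum_empty]

theorem sum_mul_esymZ_natCast (a : ℕ) :
    (∑ i, z i) * esymZ n z a
      = ∑ S ∈ powersetCard a univ, ∑ i ∈ Sᶜ, z i * ∏ j ∈ S, z j
        + ∑ S ∈ powersetCard a univ, ∑ i ∈ S, z i * ∏ j ∈ S, z j := by
  rw [esymZ_natCast, mul_sum, ← sum_add_distrib]
  refine sum_congr rfl fun S _ => ?_
  rw [← sum_mul, ← sum_mul, ← add_mul, sum_compl_add_sum]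

theorem succ_smul_esymZ_natCast_add_one (a : ℕ) :
    (a + 1) • esymZ n z (a + 1)
      = ∑ S ∈ powersetCard a univ, ∑ i ∈ Sᶜ, z i * ∏ j ∈ S, z j := by
  rw [sum_powersetCard_sum_compl_eq_sum_sum_erase, ← Nat.cast_succ, esymZ_natCast, smul_sum]
  refine sum_congr rfl fun T hT => ?_
  rw [← (mem_powersetCard_univ.mp hT), ← sum_const]
  exact sum_congr rfl fun i hi => (mul_prod_erase T z hi).symm

theorem smul_esymZ_natCast_sub_one (hz : ∀ i, z i ^ 2 = 1) {a : ℕ} (ha : a ≤ n) :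
    (n - a + 1) • esymZ n z (a - 1)
      = ∑ S ∈ powersetCard a univ, ∑ i ∈ S, z i * ∏ j ∈ S, z j := by
  cases a with
  | zero => simp [esymZ]
  | succ b =>
    have involution_mul_prod : ∀ T : Finset (Fin n), ∀ i ∈ T,
        z i * ∏ j ∈ T, z j = ∏ j ∈ T.erase i, z j := fun T i hi => by
      rw [← mul_prod_erase T z hi, ← mul_assoc, ← sq, hz, one_mul]
    have hcount : n - (b + 1) + 1 = n - b := by omega
    rw [Nat.cast_succ, add_sub_cancel_right, esymZ_natCast, hcount,
      sum_congr rfl fun T _ => sum_congr rfl (involution_mul_prod T),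
      ← sum_powersetCard_sum_compl_eq_sum_sum_erase b fun S _ => ∏ j ∈ S, z j, smul_sum]
    refine sum_congr rfl fun S hS => ?_
    rw [sum_const, card_compl, Fintype.card_fin, mem_powersetCard_univ.mp hS]

end esymZ

theorem stmt17_general (n : ℕ) (R : Type*) [CommRing R] (z : Fin n → R)
    (hz : ∀ i, z i ^ 2 = 1) (a : ℕ) (ha : a ≤ n) :
    (∑ i, z i) * esymZ n z (a : ℤ)
      = (a + 1) • esymZ n z ((a : ℤ) + 1) + (n - a + 1) • esymZ n z ((a : ℤ) - 1) := by
  rw [sum_mul_esymZ_natCast, succ_smul_esymZ_natCast_add_one, smul_esymZ_natCast_sub_one z hz ha]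

theorem stmt17 (n : ℕ) (hn : 1 ≤ n) (R : Type*) [CommRing R] (z : Fin n → R)
    (hz : ∀ i, z i ^ 2 = 1) (a : ℕ) (ha : a ≤ n) :
    (∑ i, z i) * esymZ n z (a : ℤ)
      = (a + 1) • esymZ n z ((a : ℤ) + 1) + (n - a + 1) • esymZ n z ((a : ℤ) - 1) :=
  stmt17_general n R z hz a ha
end
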